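/- arXiv:1111.0390 — 5 statements merged into one kernel-verified Lean document; each statement's English description precedes it below -/
import Mathlib

section
/- Let (u_1,…,u_n) be a solution of the SU(n+1) Toda system without sources and let (φ_1,…,φ_n) be smooth functions on ℝ² satisfying the linearized system Δφ_i + Σ_{j=1}^n a_{ij} e^{u_j} φ_j = 0 on ℝ² for all i. Set Φ_i = Σ_{j=1}^n a^{ij} φ_j (with Φ_0 = Φ_{n+1} = 0) and define Y := Σ_{i=1}^n ∂_z^2 Φ_i − 2 Σ_{i=1}^n (∂_z U_i)(∂_z Φ_i) + Σ_{i=1}^{n−1} [ (∂_z Φ_i)(∂_z U_{i+1}) + (∂_z U_i)(∂_z Φ_{i+1}) ]. Then ∂_{z̄} Y = 0 on ℝ², i.e. Y is an entire holomorphic function. -/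
/-!
With `∂ = wdz` and `∂̄ = wdzbar`, both `∂̄∂` and `∂∂̄` equal `Δ/4` on `C²` functions. Inverting
the Cartan matrix, the Toda system and its linearization become `ΔU_i = -e^{u_i}` and
`ΔΦ_i = -e^{u_i} φ_i`, while `u_i = 2U_i - U_{i-1} - U_{i+1}` and likewise for `φ`. The product
rule then expresses `∂̄Y` through `e^{u_i}`, `φ_i`, `∂U_i` and `∂Φ_i` alone, and the resulting sum
telescopes to zero because `U_0 = U_{n+1} = Φ_0 = Φ_{n+1} = 0`.
-/

open Complex Finset MeasureTheory

noncomputable section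

/-- Wirtinger derivative `∂_z = (∂_x - i ∂_y)/2` of a function `f : ℂ → ℂ`,
identifying `ℝ²` with `ℂ`. -/
def wdz (f : ℂ → ℂ) (z : ℂ) : ℂ :=
  (fderiv ℝ f z 1 - Complex.I * fderiv ℝ f z Complex.I) / 2

/-- Wirtinger derivative `∂_z̄ = (∂_x + i ∂_y)/2`. -/
def wdzbar (f : ℂ → ℂ) (z : ℂ) : ℂ :=
  (fderiv ℝ f z 1 + Complex.I * fderiv ℝ f z Complex.I) / 2

/-- Laplacian `Δ = ∂_xx + ∂_yy` of a real-valued function on `ℂ ≃ ℝ²`. -/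
def lap (u : ℂ → ℝ) (z : ℂ) : ℝ :=
  fderiv ℝ (fun w => fderiv ℝ u w 1) z 1 +
    fderiv ℝ (fun w => fderiv ℝ u w Complex.I) z Complex.I

/-- Cartan matrix of SU(n+1) (entries indexed by `1 ≤ i, j ≤ n`):
`a_{ii} = 2`, `a_{ij} = -1` if `|i - j| = 1`, `a_{ij} = 0` otherwise. -/
def cartan (i j : ℕ) : ℝ :=
  if i = j then 2 else if i + 1 = j ∨ j + 1 = i then -1 else 0

/-- Entries of the inverse Cartan matrix: `a^{ij} = min(i,j)·(n+1−max(i,j))/(n+1)`. -/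
def cartanInv (n i j : ℕ) : ℝ :=
  (min i j : ℝ) * ((n : ℝ) + 1 - (max i j : ℝ)) / ((n : ℝ) + 1)

/-- `U_i = Σ_{j=1}^n a^{ij} u_j` with the convention `U_i = 0` for `i ∉ {1,…,n}`. -/
def Ufun (n : ℕ) (u : ℕ → ℂ → ℝ) (i : ℕ) (z : ℂ) : ℝ :=
  if 1 ≤ i ∧ i ≤ n then ∑ j ∈ Finset.Icc 1 n, cartanInv n i j * u j z else 0

/-- `U_i` viewed as a complex-valued function. -/
def UfunC (n : ℕ) (u : ℕ → ℂ → ℝ) (i : ℕ) : ℂ → ℂ := fun z => (Ufun n u i z : ℂ)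

/-- `α_i = Σ_{j=1}^n a^{ij} γ_j`. -/
def alph (n : ℕ) (γ : ℕ → ℝ) (i : ℕ) : ℝ :=
  ∑ j ∈ Finset.Icc 1 n, cartanInv n i j * γ j

/-- The invariants `W_k^j`:  `W_0^j = 0`, `W_1^j = −e^{U_1} ∂_z^{j+1}(e^{−U_1})`,
`W_{k+1}^j = −(∂_z̄ W_k^j)/(∂_z ∂_z̄ U_k)`. -/
def Wk (n : ℕ) (u : ℕ → ℂ → ℝ) : ℕ → ℕ → ℂ → ℂ
  | 0, _ => fun _ => 0
  | 1, j => fun z =>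
      -Complex.exp ((Ufun n u 1 z : ℝ) : ℂ) *
        wdz^[j + 1] (fun w => Complex.exp (-((Ufun n u 1 w : ℝ) : ℂ))) z
  | (k + 2), j => fun z =>
      -(wdzbar (Wk n u (k + 1) j) z) / wdz (wdzbar (UfunC n u (k + 1))) z

/-- A solution of the `SU(n+1)` Toda system without sources: smooth functions
`u_1, …, u_n : ℝ² → ℝ` with `Δu_i + Σ_j a_{ij} e^{u_j} = 0` on `ℝ²` and
`∫_{ℝ²} e^{u_i} < ∞`. -/
def IsTodaSolution (n : ℕ) (u : ℕ → ℂ → ℝ) : Prop :=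
  ∀ i ∈ Finset.Icc 1 n,
    ContDiff ℝ (⊤ : ℕ∞) (u i) ∧
    (∀ z : ℂ, lap (u i) z + ∑ j ∈ Finset.Icc 1 n, cartan i j * Real.exp (u j z) = 0) ∧
    MeasureTheory.Integrable (fun z : ℂ => Real.exp (u i z))

/-- A solution of the `SU(n+1)` Toda system with singular source `4πγ_iδ_0`:
smooth on `ℂ∖{0}`, `Δu_i + Σ_j a_{ij} e^{u_j} = 0` off the origin,
`u_i(z) − 2γ_i log|z|` bounded near `0`, and `∫ e^{u_i} < ∞`. -/
def IsSingularTodaSolution (n : ℕ) (γ : ℕ → ℝ) (u : ℕ → ℂ → ℝ) : Prop :=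
  ∀ i ∈ Finset.Icc 1 n,
    ContDiffOn ℝ (⊤ : ℕ∞) (u i) {(0 : ℂ)}ᶜ ∧
    (∀ z : ℂ, z ≠ 0 →
      lap (u i) z + ∑ j ∈ Finset.Icc 1 n, cartan i j * Real.exp (u j z) = 0) ∧
    (∃ ε > (0:ℝ), ∃ C : ℝ, ∀ z : ℂ, z ≠ 0 → ‖z‖ < ε →
      |u i z - 2 * γ i * Real.log (‖z‖)| ≤ C) ∧
    MeasureTheory.Integrable (fun z : ℂ => Real.exp (u i z))

/-- `det_k(f)`: the determinant of the `k×k` matrix `(∂_z^p ∂_z̄^q f)_{0 ≤ p,q ≤ k−1}`,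
with `det_0(f) = 1`. -/
def detk (k : ℕ) (f : ℂ → ℂ) (z : ℂ) : ℂ :=
  Matrix.det (Matrix.of fun p q : Fin k => wdz^[(p : ℕ)] (wdzbar^[(q : ℕ)] f) z)

open Laplacian InnerProductSpace

section Wirtinger

variable {f g : ℂ → ℂ} {z : ℂ}

theorem ContDiff.wdz {n : WithTop ℕ∞} (hf : ContDiff ℝ (n + 1) f) : ContDiff ℝ n (wdz f) := by
  have hf' := hf.fderiv_right (m := n) le_rfl
  exact ((hf'.clm_apply contDiff_const).sub
    (contDiff_const.mul (hf'.clm_apply contDiff_const))).div_const 2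

theorem ContDiff.wdzbar {n : WithTop ℕ∞} (hf : ContDiff ℝ (n + 1) f) :
    ContDiff ℝ n (wdzbar f) := by
  have hf' := hf.fderiv_right (m := n) le_rfl
  exact ((hf'.clm_apply contDiff_const).add
    (contDiff_const.mul (hf'.clm_apply contDiff_const))).div_const 2

theorem wdz_sub (hf : DifferentiableAt ℝ f z) (hg : DifferentiableAt ℝ g z) :
    wdz (fun w => f w - g w) z = wdz f z - wdz g z := by
  simp only [wdz, fderiv_fun_sub hf hg]; simp; ring

theorem wdz_const_mul (hf : DifferentiableAt ℝ f z) (c : ℂ) :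
    wdz (fun w => c * f w) z = c * wdz f z := by
  simp only [wdz, fderiv_const_mul hf]; simp; ring

theorem wdz_mul (hf : DifferentiableAt ℝ f z) (hg : DifferentiableAt ℝ g z) :
    wdz (fun w => f w * g w) z = wdz f z * g z + f z * wdz g z := by
  simp only [wdz, fderiv_fun_mul hf hg]; simp; ring

theorem wdz_cexp (hf : DifferentiableAt ℝ f z) :
    wdz (fun w => cexp (f w)) z = cexp (f z) * wdz f z := by
  simp only [wdz, hf.hasFDerivAt.cexp.fderiv]; simp; ring

theorem wdzbar_add (hf : DifferentiableAt ℝ f z) (hg : DifferentiableAt ℝ g z) :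
    wdzbar (fun w => f w + g w) z = wdzbar f z + wdzbar g z := by
  simp only [wdzbar, fderiv_fun_add hf hg]; simp; ring

theorem wdzbar_sub (hf : DifferentiableAt ℝ f z) (hg : DifferentiableAt ℝ g z) :
    wdzbar (fun w => f w - g w) z = wdzbar f z - wdzbar g z := by
  simp only [wdzbar, fderiv_fun_sub hf hg]; simp; ring

theorem wdzbar_const_mul (hf : DifferentiableAt ℝ f z) (c : ℂ) :
    wdzbar (fun w => c * f w) z = c * wdzbar f z := by
  simp only [wdzbar, fderiv_const_mul hf]; simp; ring

theorem wdzbar_mul (hf : DifferentiableAt ℝ f z) (hg : DifferentiableAt ℝ g z) :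
    wdzbar (fun w => f w * g w) z = wdzbar f z * g z + f z * wdzbar g z := by
  simp only [wdzbar, fderiv_fun_mul hf hg]; simp; ring

theorem wdzbar_sum {ι : Type*} (s : Finset ι) {F : ι → ℂ → ℂ}
    (hF : ∀ i ∈ s, DifferentiableAt ℝ (F i) z) :
    wdzbar (fun w => ∑ i ∈ s, F i w) z = ∑ i ∈ s, wdzbar (F i) z := by
  simp only [wdzbar, fderiv_fun_sum hF, _root_.sum_apply, mul_sum, ← sum_add_distrib,
    sum_div]

theorem fderiv_apply_fderiv {F : Type*} [NormedAddCommGroup F] [NormedSpace ℝ F] {h : ℂ → F}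
    (hh : DifferentiableAt ℝ (fderiv ℝ h) z) (v w : ℂ) :
    fderiv ℝ (fun y => fderiv ℝ h y v) z w = fderiv ℝ (fderiv ℝ h) z w v := by
  simp [fderiv_clm_apply hh (differentiableAt_const v)]

theorem lap_eq_laplacian {u : ℂ → ℝ} (hu : ContDiffAt ℝ 2 u z) : lap u z = Δ u z := by
  have hd : DifferentiableAt ℝ (fderiv ℝ u) z :=
    (hu.fderiv_right (m := 1) le_rfl).differentiableAt one_ne_zero
  simp [lap, laplacian_eq_iteratedFDeriv_complexPlane, iteratedFDeriv_two_apply,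
    fderiv_apply_fderiv hd]

theorem fderiv_wdz_apply (hf : ContDiffAt ℝ 2 f z) (v : ℂ) :
    fderiv ℝ (wdz f) z v
      = (fderiv ℝ (fderiv ℝ f) z v 1 - I * fderiv ℝ (fderiv ℝ f) z v I) / 2 := by
  have hd := (hf.fderiv_right (m := 1) le_rfl).differentiableAt one_ne_zero
  have h1 := hd.hasFDerivAt.clm_apply (hasFDerivAt_const (1 : ℂ) z)
  have hI := hd.hasFDerivAt.clm_apply (hasFDerivAt_const I z)
  rw [show wdz f = fun y => (fderiv ℝ f y 1 - I * fderiv ℝ f y I) * 2⁻¹ from rfl,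
    ((h1.fun_sub (hI.const_mul I)).mul_const 2⁻¹).fderiv]
  simp; ring

theorem fderiv_wdzbar_apply (hf : ContDiffAt ℝ 2 f z) (v : ℂ) :
    fderiv ℝ (wdzbar f) z v
      = (fderiv ℝ (fderiv ℝ f) z v 1 + I * fderiv ℝ (fderiv ℝ f) z v I) / 2 := by
  have hd := (hf.fderiv_right (m := 1) le_rfl).differentiableAt one_ne_zero
  have h1 := hd.hasFDerivAt.clm_apply (hasFDerivAt_const (1 : ℂ) z)
  have hI := hd.hasFDerivAt.clm_apply (hasFDerivAt_const I z)
  rw [show wdzbar f = fun y => (fderiv ℝ f y 1 + I * fderiv ℝ f y I) * 2⁻¹ from rfl,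
    ((h1.fun_add (hI.const_mul I)).mul_const 2⁻¹).fderiv]
  simp; ring

theorem wdzbar_wdz_eq_laplacian (hf : ContDiffAt ℝ 2 f z) : wdzbar (wdz f) z = Δ f z / 4 := by
  have hsymm := hf.isSymmSndFDerivAt (by simp) 1 I
  rw [wdzbar, fderiv_wdz_apply hf, fderiv_wdz_apply hf, laplacian_eq_iteratedFDeriv_complexPlane]
  simp only [iteratedFDeriv_two_apply, Matrix.cons_val_zero, Matrix.cons_val_one, hsymm]
  linear_combination (-fderiv ℝ (fderiv ℝ f) z I I / 4) * I_sq

theorem wdz_wdzbar_eq_laplacian (hf : ContDiffAt ℝ 2 f z) : wdz (wdzbar f) z = Δ f z / 4 := by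
  have hsymm := hf.isSymmSndFDerivAt (by simp) 1 I
  rw [wdz, fderiv_wdzbar_apply hf, fderiv_wdzbar_apply hf, laplacian_eq_iteratedFDeriv_complexPlane]
  simp only [iteratedFDeriv_two_apply, Matrix.cons_val_zero, Matrix.cons_val_one, hsymm]
  linear_combination (-fderiv ℝ (fderiv ℝ f) z I I / 4) * I_sq

theorem wdzbar_wdz_comm (hf : ContDiffAt ℝ 2 f z) : wdzbar (wdz f) z = wdz (wdzbar f) z := by
  rw [wdzbar_wdz_eq_laplacian hf, wdz_wdzbar_eq_laplacian hf]

end Wirtinger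

theorem laplacian_sum {E F ι : Type*} [NormedAddCommGroup E] [InnerProductSpace ℝ E]
    [FiniteDimensional ℝ E] [NormedAddCommGroup F] [NormedSpace ℝ F] (s : Finset ι)
    {f : ι → E → F} {x : E} (hf : ∀ i ∈ s, ContDiffAt ℝ 2 (f i) x) :
    Δ (∑ i ∈ s, f i) x = ∑ i ∈ s, Δ (f i) x := by
  simp [laplacian_eq_iteratedFDeriv_stdOrthonormalBasis, iteratedFDeriv_sum_apply hf]
  exact sum_comm

section Cartan

variable {n : ℕ}

theorem cartan_comm (i j : ℕ) : cartan i j = cartan j i := by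
  unfold cartan; split_ifs <;> first | rfl | omega

theorem cartanInv_comm (i j : ℕ) : cartanInv n i j = cartanInv n j i := by
  simp [cartanInv, min_comm, max_comm]

theorem cartanInv_of_le {i j : ℕ} (h : i ≤ j) :
    cartanInv n i j = i * ((n : ℝ) + 1 - j) / ((n : ℝ) + 1) := by
  have h' : (i : ℝ) ≤ j := by exact_mod_cast h
  simp [cartanInv, h']

theorem cartanInv_of_ge {i j : ℕ} (h : j ≤ i) :
    cartanInv n i j = j * ((n : ℝ) + 1 - i) / ((n : ℝ) + 1) := by
  rw [cartanInv_comm, cartanInv_of_le h]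

-- Each column of `cartanInv` is piecewise linear in the row index, with a kink of size one at
-- the diagonal.
theorem cartanInv_second_diff {i k : ℕ} (hi : 1 ≤ i) :
    2 * cartanInv n i k - cartanInv n (i - 1) k - cartanInv n (i + 1) k
      = if i = k then 1 else 0 := by
  have hn : (n : ℝ) + 1 ≠ 0 := by positivity
  rcases lt_trichotomy i k with h | rfl | h
  · rw [cartanInv_of_le h.le, cartanInv_of_le (by omega : i - 1 ≤ k),
      cartanInv_of_le (by omega : i + 1 ≤ k), if_neg h.ne, Nat.cast_sub hi]
    field_simp; push_cast; ring
  · rw [cartanInv_of_le le_rfl, cartanInv_of_le (by omega : i - 1 ≤ i),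
      cartanInv_of_ge (by omega : i ≤ i + 1), if_pos rfl, Nat.cast_sub hi]
    field_simp; push_cast; ring
  · rw [cartanInv_of_ge h.le, cartanInv_of_ge (by omega : k ≤ i - 1),
      cartanInv_of_ge (by omega : k ≤ i + 1), if_neg h.ne', Nat.cast_sub hi]
    field_simp; push_cast; ring

theorem sum_cartan_mul {x : ℕ → ℝ} (h0 : x 0 = 0) (hn : x (n + 1) = 0) {i : ℕ}
    (hi : i ∈ Icc 1 n) :
    ∑ j ∈ Icc 1 n, cartan i j * x j = 2 * x i - x (i - 1) - x (i + 1) := by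
  rw [mem_Icc] at hi
  have hterm : ∀ j, cartan i j * x j
      = (if j = i then 2 * x i else 0) - (if j = i - 1 then x (i - 1) else 0)
        - (if j = i + 1 then x (i + 1) else 0) := by
    intro j
    unfold cartan
    split_ifs <;> subst_vars <;> first | omega | ring
  have hlo : (if i - 1 ∈ Icc 1 n then x (i - 1) else 0) = x (i - 1) := by
    split_ifs with h
    · rfl
    · rw [mem_Icc] at h
      rw [show i - 1 = 0 by omega, h0]
  have hhi : (if i + 1 ∈ Icc 1 n then x (i + 1) else 0) = x (i + 1) := by
    split_ifs with h
    · rfl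
    · rw [mem_Icc] at h
      rw [show i + 1 = n + 1 by omega, hn]
  simp only [hterm, sum_sub_distrib, sum_ite_eq', hlo, hhi, if_pos (mem_Icc.2 hi)]

theorem sum_cartanInv_mul_cartan {i k : ℕ} (hi : i ≤ n + 1) (hk : k ∈ Icc 1 n) :
    ∑ j ∈ Icc 1 n, cartanInv n i j * cartan j k = if i = k then 1 else 0 := by
  have h0 : cartanInv n i 0 = 0 := by simp [cartanInv]
  have hn : cartanInv n i (n + 1) = 0 := by simp [cartanInv_of_le hi]
  simp_rw [mul_comm (cartanInv n i _), cartan_comm _ k]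
  rw [sum_cartan_mul (x := cartanInv n i) h0 hn hk, cartanInv_comm i k,
    cartanInv_comm i (k - 1), cartanInv_comm i (k + 1), cartanInv_second_diff (mem_Icc.1 hk).1]
  simp only [eq_comm]

theorem sum_cartanInv_mul_sum_cartan_mul (y : ℕ → ℝ) {i : ℕ} (hi : i ∈ Icc 1 n) :
    ∑ j ∈ Icc 1 n, cartanInv n i j * ∑ k ∈ Icc 1 n, cartan j k * y k = y i := by
  simp_rw [mul_sum, ← mul_assoc]
  rw [sum_comm]
  simp_rw [← sum_mul]
  rw [sum_congr rfl fun k hk => by rw [sum_cartanInv_mul_cartan (by grind) hk]]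
  simp [hi]

end Cartan

section Ufun

variable {n : ℕ} {v : ℕ → ℂ → ℝ}

theorem Ufun_eq_sum {i : ℕ} (hi : i ≤ n + 1) (z : ℂ) :
    Ufun n v i z = ∑ j ∈ Icc 1 n, cartanInv n i j * v j z := by
  unfold Ufun
  split_ifs with h
  · rfl
  · refine (sum_eq_zero fun j hj => ?_).symm
    rw [mem_Icc] at hj
    rcases (by omega : i = 0 ∨ i = n + 1) with rfl | rfl
    · simp [cartanInv]
    · simp [cartanInv_of_ge (by omega : j ≤ n + 1)]

theorem Ufun_second_diff {i : ℕ} (hi : i ∈ Icc 1 n) (z : ℂ) :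
    2 * Ufun n v i z - Ufun n v (i - 1) z - Ufun n v (i + 1) z = v i z := by
  rw [mem_Icc] at hi
  have hterm : ∀ j, 2 * (cartanInv n i j * v j z) - cartanInv n (i - 1) j * v j z
      - cartanInv n (i + 1) j * v j z = (if i = j then v j z else 0) := fun j => by
    have h := cartanInv_second_diff (n := n) (k := j) hi.1
    split_ifs at h ⊢ <;> linear_combination v j z * h
  rw [Ufun_eq_sum (by omega), Ufun_eq_sum (by omega), Ufun_eq_sum (by omega), mul_sum,
    ← sum_sub_distrib, ← sum_sub_distrib]
  simp [hterm, hi]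

theorem Ufun_contDiff {k : WithTop ℕ∞} (hv : ∀ j ∈ Icc 1 n, ContDiff ℝ k (v j)) (i : ℕ) :
    ContDiff ℝ k (Ufun n v i) := by
  by_cases h : 1 ≤ i ∧ i ≤ n
  · rw [show Ufun n v i = fun z => ∑ j ∈ Icc 1 n, cartanInv n i j * v j z from
      funext fun z => if_pos h]
    exact ContDiff.sum fun j hj => contDiff_const.mul (hv j hj)
  · rw [show Ufun n v i = fun _ => 0 from funext fun z => if_neg h]
    exact contDiff_const

theorem UfunC_contDiff {k : WithTop ℕ∞} (hv : ∀ j ∈ Icc 1 n, ContDiff ℝ k (v j)) (i : ℕ) :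
    ContDiff ℝ k (UfunC n v i) :=
  ofRealCLM.contDiff.comp (Ufun_contDiff hv i)

theorem wdz_UfunC_eq_zero {i : ℕ} (hi : i ∉ Icc 1 n) (z : ℂ) : wdz (UfunC n v i) z = 0 := by
  rw [mem_Icc] at hi
  have h : UfunC n v i = fun _ => 0 := funext fun w => by simp [UfunC, Ufun, hi]
  simp [h, wdz]

theorem laplacian_Ufun (hv : ∀ j ∈ Icc 1 n, ContDiff ℝ 2 (v j)) {i : ℕ} (hi : i ∈ Icc 1 n)
    (z : ℂ) : Δ (Ufun n v i) z = ∑ j ∈ Icc 1 n, cartanInv n i j * Δ (v j) z := by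
  have h : Ufun n v i = ∑ j ∈ Icc 1 n, cartanInv n i j • v j := by
    funext w
    simp [Ufun, mem_Icc.1 hi]
  rw [h, laplacian_sum (f := fun j => cartanInv n i j • v j) _
    fun j hj => ((hv j hj).const_smul (cartanInv n i j)).contDiffAt]
  exact sum_congr rfl fun j hj => laplacian_smul _ (hv j hj).contDiffAt

theorem wdzbar_wdz_UfunC {r : ℕ → ℂ → ℝ} (hv : ∀ j ∈ Icc 1 n, ContDiff ℝ 2 (v j))
    (hlap : ∀ j ∈ Icc 1 n, ∀ w, lap (v j) w + ∑ k ∈ Icc 1 n, cartan j k * r k w = 0)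
    {i : ℕ} (hi : i ∈ Icc 1 n) (z : ℂ) : wdzbar (wdz (UfunC n v i)) z = -(r i z : ℂ) / 4 := by
  have hΔ : ∀ j ∈ Icc 1 n, Δ (v j) z = -∑ k ∈ Icc 1 n, cartan j k * r k z := fun j hj => by
    rw [← lap_eq_laplacian (hv j hj).contDiffAt]
    linarith [hlap j hj z]
  have hU : UfunC n v i = ofRealCLM ∘ Ufun n v i := rfl
  rw [wdzbar_wdz_eq_laplacian (UfunC_contDiff hv i).contDiffAt, hU,
    (Ufun_contDiff hv i).contDiffAt.laplacian_CLM_comp_left, Function.comp_apply,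
    laplacian_Ufun hv hi, sum_congr rfl fun j hj => by rw [hΔ j hj]]
  simp [sum_cartanInv_mul_sum_cartan_mul _ hi, neg_div]

theorem wdz_ofReal_eq_second_diff (hv : ∀ j ∈ Icc 1 n, ContDiff ℝ 1 (v j)) {i : ℕ}
    (hi : i ∈ Icc 1 n) (z : ℂ) :
    wdz (fun w => (v i w : ℂ)) z
      = 2 * wdz (UfunC n v i) z - wdz (UfunC n v (i - 1)) z - wdz (UfunC n v (i + 1)) z := by
  have hd : ∀ k, DifferentiableAt ℝ (UfunC n v k) z :=
    fun k => (UfunC_contDiff hv k).differentiable one_ne_zero z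
  have h : (fun w => (v i w : ℂ))
      = fun w => 2 * UfunC n v i w - UfunC n v (i - 1) w - UfunC n v (i + 1) w := by
    funext w
    rw [← Ufun_second_diff (v := v) hi w]
    simp only [UfunC]
    push_cast; ring
  rw [h, wdz_sub (((hd i).const_mul 2).fun_sub (hd _)) (hd _), wdz_sub ((hd i).const_mul 2) (hd _),
    wdz_const_mul (hd i)]

theorem wdz_wdzbar_wdz_UfunC {u φ : ℕ → ℂ → ℝ} (hu : ∀ j ∈ Icc 1 n, ContDiff ℝ 1 (u j))
    (hφ : ∀ j ∈ Icc 1 n, ContDiff ℝ 1 (φ j)) {i : ℕ} (hi : i ∈ Icc 1 n)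
    (h : wdzbar (wdz (UfunC n φ i)) = fun w => -(cexp (u i w) * φ i w) / 4) (z : ℂ) :
    wdz (wdzbar (wdz (UfunC n φ i))) z
      = -(cexp (u i z) * ((2 * wdz (UfunC n u i) z - wdz (UfunC n u (i - 1)) z
          - wdz (UfunC n u (i + 1)) z) * φ i z + (2 * wdz (UfunC n φ i) z
          - wdz (UfunC n φ (i - 1)) z - wdz (UfunC n φ (i + 1)) z))) / 4 := by
  have du : DifferentiableAt ℝ (fun w => (u i w : ℂ)) z :=
    (ofRealCLM.contDiff.comp (hu i hi)).differentiable one_ne_zero z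
  have dφ : DifferentiableAt ℝ (fun w => (φ i w : ℂ)) z :=
    (ofRealCLM.contDiff.comp (hφ i hi)).differentiable one_ne_zero z
  rw [h, show (fun w => -(cexp (u i w) * φ i w) / 4)
      = fun w => (-1 / 4 : ℂ) * (cexp (u i w) * φ i w) from funext fun w => by ring,
    wdz_const_mul (du.cexp.fun_mul dφ), wdz_mul du.cexp dφ, wdz_cexp du,
    wdz_ofReal_eq_second_diff hu hi, wdz_ofReal_eq_second_diff hφ hi]
  ring

end Ufun

-- The quantity `Y` of the statement, for arbitrary `U_i` and `Φ_i`.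
def todaInvariant (n : ℕ) (U Φ : ℕ → ℂ → ℂ) (w : ℂ) : ℂ :=
  (∑ i ∈ Icc 1 n, wdz (wdz (Φ i)) w) - 2 * ∑ i ∈ Icc 1 n, wdz (U i) w * wdz (Φ i) w
    + ∑ i ∈ Icc 1 (n - 1), (wdz (Φ i) w * wdz (U (i + 1)) w + wdz (U i) w * wdz (Φ (i + 1)) w)

section Invariant

variable {n : ℕ}

theorem wdzbar_todaInvariant {U Φ : ℕ → ℂ → ℂ} (hU : ∀ i, ContDiff ℝ 2 (U i))
    (hΦ : ∀ i, ContDiff ℝ 3 (Φ i)) {z : ℂ} {A B C : ℕ → ℂ}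
    (hA : ∀ i ∈ Icc 1 n, wdzbar (wdz (U i)) z = A i)
    (hB : ∀ i ∈ Icc 1 n, wdzbar (wdz (Φ i)) z = B i)
    (hC : ∀ i ∈ Icc 1 n, wdz (wdzbar (wdz (Φ i))) z = C i) :
    wdzbar (todaInvariant n U Φ) z
      = ∑ i ∈ Icc 1 n, (C i - 2 * (A i * wdz (Φ i) z + wdz (U i) z * B i))
        + ∑ i ∈ Icc 1 (n - 1), (B i * wdz (U (i + 1)) z + wdz (Φ i) z * A (i + 1)
          + (A i * wdz (Φ (i + 1)) z + wdz (U i) z * B (i + 1))) := by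
  have dU : ∀ i, Differentiable ℝ (wdz (U i)) :=
    fun i => (hU i).wdz.differentiable one_ne_zero
  have dΦ : ∀ i, Differentiable ℝ (wdz (Φ i)) :=
    fun i => (hΦ i).wdz.differentiable two_ne_zero
  have dΦΦ : ∀ i, Differentiable ℝ (wdz (wdz (Φ i))) :=
    fun i => (hΦ i).wdz.wdz.differentiable one_ne_zero
  have dS1 : DifferentiableAt ℝ (fun w => ∑ i ∈ Icc 1 n, wdz (wdz (Φ i)) w) z :=
    DifferentiableAt.fun_sum fun i _ => dΦΦ i z
  have dS2 : DifferentiableAt ℝ (fun w => ∑ i ∈ Icc 1 n, wdz (U i) w * wdz (Φ i) w) z :=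
    DifferentiableAt.fun_sum fun i _ => (dU i z).mul (dΦ i z)
  have dS3 : DifferentiableAt ℝ (fun w => ∑ i ∈ Icc 1 (n - 1),
      (wdz (Φ i) w * wdz (U (i + 1)) w + wdz (U i) w * wdz (Φ (i + 1)) w)) z :=
    DifferentiableAt.fun_sum fun i _ => ((dΦ i z).mul (dU _ z)).add ((dU i z).mul (dΦ _ z))
  unfold todaInvariant
  rw [wdzbar_add (dS1.fun_sub (dS2.const_mul 2)) dS3, wdzbar_sub dS1 (dS2.const_mul 2),
    wdzbar_const_mul dS2, wdzbar_sum _ fun i _ => dΦΦ i z,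
    wdzbar_sum _ fun i _ => (dU i z).fun_mul (dΦ i z),
    wdzbar_sum _ fun i _ => ((dΦ i z).fun_mul (dU _ z)).fun_add ((dU i z).fun_mul (dΦ _ z)),
    mul_sum, ← sum_sub_distrib]
  congr 1
  · refine sum_congr rfl fun i hi => ?_
    rw [wdzbar_wdz_comm ((hΦ i).wdz.contDiffAt), hC i hi, wdzbar_mul (dU i z) (dΦ i z),
      hA i hi, hB i hi]
  · refine sum_congr rfl fun i hi => ?_
    have hi' : i ∈ Icc 1 n := by grind
    have hi'' : i + 1 ∈ Icc 1 n := by grind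
    rw [wdzbar_add ((dΦ i z).fun_mul (dU _ z)) ((dU i z).fun_mul (dΦ _ z)),
      wdzbar_mul (dΦ i z) (dU _ z), wdzbar_mul (dU i z) (dΦ _ z), hA i hi', hA _ hi'', hB i hi',
      hB _ hi'']

theorem sum_Icc_one_sub_one_of_eq_zero {M : Type*} [AddCommMonoid M] {f : ℕ → M} (hf : f n = 0) :
    ∑ i ∈ Icc 1 (n - 1), f i = ∑ i ∈ Icc 1 n, f i := by
  rcases n with _ | n
  · rfl
  · rw [sum_Icc_succ_top (by omega), hf, add_zero, Nat.add_sub_cancel]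

theorem sum_Icc_one_sub_one_succ {M : Type*} [AddCommMonoid M] {g : ℕ → M} (hg : g 1 = 0) :
    ∑ i ∈ Icc 1 (n - 1), g (i + 1) = ∑ i ∈ Icc 1 n, g i := by
  induction n with
  | zero => rfl
  | succ n ih =>
    rcases n with _ | n
    · simp [hg]
    · rw [Nat.add_sub_cancel] at ih ⊢
      rw [sum_Icc_succ_top (by omega), ih, ← sum_Icc_succ_top (by omega)]

-- The right-hand side of `wdzbar_todaInvariant` once `∂̄∂U_i = -E_i/4`, `∂̄∂Φ_i = -E_i p_i/4` and
-- `∂(E_i p_i) = E_i (∂u_i p_i + ∂φ_i)` are inserted, with `a = ∂U`, `b = ∂Φ`.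
theorem toda_sum_cancel {a b E p : ℕ → ℂ} (ha₀ : a 0 = 0) (ha : a (n + 1) = 0)
    (hb₀ : b 0 = 0) (hb : b (n + 1) = 0) :
    ∑ i ∈ Icc 1 n, (-(E i * ((2 * a i - a (i - 1) - a (i + 1)) * p i
          + (2 * b i - b (i - 1) - b (i + 1)))) / 4
        - 2 * (-E i / 4 * b i + a i * (-(E i * p i) / 4)))
      + ∑ i ∈ Icc 1 (n - 1), (-(E i * p i) / 4 * a (i + 1) + b i * (-E (i + 1) / 4)
        + (-E i / 4 * b (i + 1) + a i * (-(E (i + 1) * p (i + 1)) / 4))) = 0 := by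
  let f i := E i * (a (i + 1) * p i + b (i + 1))
  let g i := E i * (a (i - 1) * p i + b (i - 1))
  have hf : ∑ i ∈ Icc 1 (n - 1), f i = ∑ i ∈ Icc 1 n, f i :=
    sum_Icc_one_sub_one_of_eq_zero (by simp [f, ha, hb])
  have hg : ∑ i ∈ Icc 1 (n - 1), g (i + 1) = ∑ i ∈ Icc 1 n, g i :=
    sum_Icc_one_sub_one_succ (by simp [g, ha₀, hb₀])
  calc _ = (∑ i ∈ Icc 1 n, (f i + g i)) / 4 - (∑ i ∈ Icc 1 (n - 1), (f i + g (i + 1))) / 4 := by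
        rw [sum_div, sum_div, sub_eq_add_neg, ← sum_neg_distrib]
        congr 1 <;> refine sum_congr rfl fun i _ => ?_ <;> simp only [f, g, Nat.add_sub_cancel]
          <;> ring
    _ = 0 := by rw [sum_add_distrib, sum_add_distrib, hf, hg, sub_self]

end Invariant

theorem toda_linearized_invariant_holomorphic_general (n : ℕ)
    (u : ℕ → ℂ → ℝ) (hu : IsTodaSolution n u)
    (φ : ℕ → ℂ → ℝ)
    (hφsmooth : ∀ i ∈ Finset.Icc 1 n, ContDiff ℝ (⊤ : ℕ∞) (φ i))
    (hφ : ∀ i ∈ Finset.Icc 1 n, ∀ z : ℂ,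
      lap (φ i) z + ∑ j ∈ Finset.Icc 1 n, cartan i j * Real.exp (u j z) * φ j z = 0) :
    ∀ z : ℂ,
      wdzbar (fun w =>
        (∑ i ∈ Finset.Icc 1 n, wdz (fun w' => wdz (UfunC n φ i) w') w)
        - 2 * ∑ i ∈ Finset.Icc 1 n, wdz (UfunC n u i) w * wdz (UfunC n φ i) w
        + ∑ i ∈ Finset.Icc 1 (n - 1),
            (wdz (UfunC n φ i) w * wdz (UfunC n u (i + 1)) w
              + wdz (UfunC n u i) w * wdz (UfunC n φ (i + 1)) w)) z = 0 := by
  intro z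
  have hu2 : ∀ i ∈ Icc 1 n, ContDiff ℝ 2 (u i) :=
    fun i hi => (hu i hi).1.of_le (WithTop.coe_le_coe.mpr le_top)
  have hφ3 : ∀ i ∈ Icc 1 n, ContDiff ℝ 3 (φ i) :=
    fun i hi => (hφsmooth i hi).of_le (WithTop.coe_le_coe.mpr le_top)
  have hφ2 : ∀ i ∈ Icc 1 n, ContDiff ℝ 2 (φ i) := fun i hi => (hφ3 i hi).of_le (by norm_num)
  have hA : ∀ i ∈ Icc 1 n, ∀ w, wdzbar (wdz (UfunC n u i)) w = -cexp (u i w) / 4 :=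
    fun i hi w => by
      rw [wdzbar_wdz_UfunC hu2 (fun j hj => (hu j hj).2.1) hi w, ofReal_exp]
  have hB : ∀ i ∈ Icc 1 n, ∀ w, wdzbar (wdz (UfunC n φ i)) w = -(cexp (u i w) * φ i w) / 4 :=
    fun i hi w => by
      rw [wdzbar_wdz_UfunC (r := fun j w => Real.exp (u j w) * φ j w) hφ2
        (by simpa only [mul_assoc] using hφ) hi w]
      push_cast; rfl
  show wdzbar (todaInvariant n (UfunC n u) (UfunC n φ)) z = 0
  rw [wdzbar_todaInvariant (UfunC_contDiff hu2) (UfunC_contDiff hφ3) (fun i hi => hA i hi z)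
    (fun i hi => hB i hi z) fun i hi => wdz_wdzbar_wdz_UfunC
      (fun j hj => (hu2 j hj).of_le one_le_two) (fun j hj => (hφ2 j hj).of_le one_le_two) hi
      (funext (hB i hi)) z]
  exact toda_sum_cancel (wdz_UfunC_eq_zero (by simp) z) (wdz_UfunC_eq_zero (by simp) z)
    (wdz_UfunC_eq_zero (by simp) z) (wdz_UfunC_eq_zero (by simp) z)

/-- Let `(u_i)` solve the `SU(n+1)` Toda system without sources and
let `(φ_i)` be smooth solutions of the linearized system. With
`Φ_i = Σ_j a^{ij} φ_j` (and `Φ_0 = Φ_{n+1} = 0`), the quantity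
`Y = Σ_i ∂_z² Φ_i − 2 Σ_i (∂_z U_i)(∂_z Φ_i) + Σ_{i=1}^{n−1} [(∂_z Φ_i)(∂_z U_{i+1}) + (∂_z U_i)(∂_z Φ_{i+1})]`
satisfies `∂_z̄ Y = 0` on `ℝ²`, i.e. `Y` is entire holomorphic. -/
theorem toda_linearized_invariant_holomorphic (n : ℕ) (hn : 1 ≤ n)
    (u : ℕ → ℂ → ℝ) (hu : IsTodaSolution n u)
    (φ : ℕ → ℂ → ℝ)
    (hφsmooth : ∀ i ∈ Finset.Icc 1 n, ContDiff ℝ (⊤ : ℕ∞) (φ i))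
    (hφ : ∀ i ∈ Finset.Icc 1 n, ∀ z : ℂ,
      lap (φ i) z + ∑ j ∈ Finset.Icc 1 n, cartan i j * Real.exp (u j z) * φ j z = 0) :
    ∀ z : ℂ,
      wdzbar (fun w =>
        (∑ i ∈ Finset.Icc 1 n, wdz (fun w' => wdz (UfunC n φ i) w') w)
        - 2 * ∑ i ∈ Finset.Icc 1 n, wdz (UfunC n u i) w * wdz (UfunC n φ i) w
        + ∑ i ∈ Finset.Icc 1 (n - 1),
            (wdz (UfunC n φ i) w * wdz (UfunC n u (i + 1)) w
              + wdz (UfunC n u i) w * wdz (UfunC n φ (i + 1)) w)) z = 0 :=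
  toda_linearized_invariant_holomorphic_general n u hu φ hφsmooth hφ
end
end

section
/- Let Ω ⊆ ℂ∖{0} be open, let f be a smooth complex-valued function on Ω, let β ∈ ℝ, and set g(z) = |z|^{2β} f(z). Then for every k ≥ 1, det_k(g) = |z|^{2kβ} det_k(f) at every point of Ω at which det_j(f) ≠ 0 for all 1 ≤ j ≤ k−1. -/
open Complex Finset MeasureTheory

noncomputable section

/-!
Write `h(z) = |z|^{2β}`. Away from the origin `∂_z h = β h / z` and `∂_z̄ h = β h / z̄`, hence
`∂_z^a ∂_z̄^b h = (β)_a (β)_b z^{-a} z̄^{-b} h` with falling factorials `(β)_n`. By the Leibniz rule,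
`∂_z^p ∂_z̄^q (h f) = h · Σ_{r,s} C(p,r) (β)_{p-r} z^{r-p} · ∂_z^r ∂_z̄^s f · C(q,s) (β)_{q-s} z̄^{s-q}`,
so the matrix `(∂_z^p ∂_z̄^q g)` equals `h · A M Bᵀ`, where `M` is the matrix of `f` and `A`, `B` are
lower triangular with ones on the diagonal. Taking determinants, `det_k(g) = h^k det_k(f)`.
-/

open ComplexConjugate
open scoped ContDiff Matrix

def wirtinger (c : ℂ) (f : ℂ → ℂ) (z : ℂ) : ℂ :=
  (fderiv ℝ f z 1 + c * fderiv ℝ f z I) / 2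

theorem wdz_eq_wirtinger : wdz = wirtinger (-I) := by
  ext f z
  simp only [wdz, wirtinger]
  ring

theorem wdzbar_eq_wirtinger : wdzbar = wirtinger I := rfl

section Wirtinger

variable {c : ℂ} {f g : ℂ → ℂ} {z : ℂ} {U : Set ℂ}

theorem wirtinger_mul (hf : DifferentiableAt ℝ f z) (hg : DifferentiableAt ℝ g z) :
    wirtinger c (fun w => f w * g w) z = wirtinger c f z * g z + f z * wirtinger c g z := by
  simp only [wirtinger, fderiv_fun_mul hf hg, add_apply, smul_apply, smul_eq_mul]
  ring

theorem wirtinger_const_mul (a : ℂ) (hf : DifferentiableAt ℝ f z) :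
    wirtinger c (fun w => a * f w) z = a * wirtinger c f z := by
  simp only [wirtinger, fderiv_const_mul hf, smul_apply, smul_eq_mul]
  ring

theorem wirtinger_sum {ι : Type*} {s : Finset ι} {F : ι → ℂ → ℂ}
    (hF : ∀ i ∈ s, DifferentiableAt ℝ (F i) z) :
    wirtinger c (fun w => ∑ i ∈ s, F i w) z = ∑ i ∈ s, wirtinger c (F i) z := by
  simp only [wirtinger, fderiv_fun_sum hF, _root_.sum_apply, mul_sum,
    ← sum_add_distrib, sum_div]

theorem wirtinger_congr (hU : IsOpen U) (h : Set.EqOn f g U) (hz : z ∈ U) :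
    wirtinger c f z = wirtinger c g z := by
  rw [wirtinger, wirtinger, (h.eventuallyEq_of_mem (hU.mem_nhds hz)).fderiv_eq]

theorem contDiffOn_wirtinger (hU : IsOpen U) (hf : ContDiffOn ℝ ∞ f U) :
    ContDiffOn ℝ ∞ (wirtinger c f) U := by
  have hf' := hf.fderiv_of_isOpen hU (m := ∞) (by simp)
  exact ((hf'.clm_apply contDiffOn_const).add
    (contDiffOn_const.mul (hf'.clm_apply contDiffOn_const))).div_const 2

theorem contDiffOn_wirtinger_iterate (hU : IsOpen U) (hf : ContDiffOn ℝ ∞ f U) (n : ℕ) :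
    ContDiffOn ℝ ∞ ((wirtinger c)^[n] f) U := by
  induction n with
  | zero => exact hf
  | succ n ih => rw [Function.iterate_succ_apply']; exact contDiffOn_wirtinger hU ih

theorem differentiableAt_wirtinger_iterate (hU : IsOpen U)
    (hf : ContDiffOn ℝ ∞ f U) (n : ℕ) (hz : z ∈ U) :
    DifferentiableAt ℝ ((wirtinger c)^[n] f) z :=
  ((contDiffOn_wirtinger_iterate hU hf n).differentiableOn (by simp)).differentiableAt
    (hU.mem_nhds hz)

theorem Set.EqOn.wirtinger_iterate (hU : IsOpen U) (h : Set.EqOn f g U) (n : ℕ) :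
    Set.EqOn ((wirtinger c)^[n] f) ((wirtinger c)^[n] g) U := by
  induction n with
  | zero => exact h
  | succ n ih =>
    intro z hz
    simp only [Function.iterate_succ_apply']
    exact wirtinger_congr hU ih hz

theorem eqOn_wirtinger_iterate_of_succ (hU : IsOpen U) {F : ℕ → ℂ → ℂ}
    (hF : ∀ n, Set.EqOn (wirtinger c (F n)) (F (n + 1)) U) (n : ℕ) :
    Set.EqOn ((wirtinger c)^[n] (F 0)) (F n) U := by
  induction n with
  | zero => exact fun _ _ => rfl
  | succ n ih =>
    intro z hz
    rw [Function.iterate_succ_apply', wirtinger_congr hU ih hz, hF n hz]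

theorem wirtinger_iterate_linearCombination (hU : IsOpen U) {ι : Type*} (s : Finset ι)
    (a : ι → ℂ) {F : ι → ℂ → ℂ} (hF : ∀ i ∈ s, ContDiffOn ℝ ∞ (F i) U) (n : ℕ) :
    Set.EqOn ((wirtinger c)^[n] (fun w => ∑ i ∈ s, a i * F i w))
      (fun w => ∑ i ∈ s, a i * (wirtinger c)^[n] (F i) w) U := by
  induction n with
  | zero => exact fun _ _ => rfl
  | succ n ih =>
    intro z hz
    have hdiff i (hi : i ∈ s) := differentiableAt_wirtinger_iterate (c := c) hU (hF i hi) n hz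
    rw [Function.iterate_succ_apply', wirtinger_congr hU ih hz,
      wirtinger_sum fun i hi => (hdiff i hi).const_mul (a i)]
    refine sum_congr rfl fun i hi => ?_
    rw [wirtinger_const_mul _ (hdiff i hi), Function.iterate_succ_apply']

theorem wirtinger_iterate_mul (hU : IsOpen U) (hf : ContDiffOn ℝ ∞ f U)
    (hg : ContDiffOn ℝ ∞ g U) (n : ℕ) :
    Set.EqOn ((wirtinger c)^[n] (fun w => f w * g w))
      (fun w => ∑ i ∈ range (n + 1),
        (n.choose i : ℂ) * ((wirtinger c)^[n - i] f w * (wirtinger c)^[i] g w)) U := by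
  induction n with
  | zero => intro z _; simp
  | succ n ih =>
    intro z hz
    have hdiff i j : DifferentiableAt ℝ
        (fun w => (wirtinger c)^[j] f w * (wirtinger c)^[i] g w) z :=
      (differentiableAt_wirtinger_iterate hU hf j hz).mul
        (differentiableAt_wirtinger_iterate hU hg i hz)
    rw [Function.iterate_succ_apply', wirtinger_congr hU ih hz,
      wirtinger_sum fun i _ => (hdiff i (n - i)).const_mul _]
    beta_reduce
    rw [sum_choose_succ_mul (fun i j => (wirtinger c)^[j] f z * (wirtinger c)^[i] g z),
      ← sum_add_distrib]
    refine sum_congr rfl fun i hi => ?_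
    have hin : n + 1 - i = n - i + 1 := by have := mem_range.1 hi; omega
    rw [wirtinger_const_mul _ (hdiff i (n - i)),
      wirtinger_mul (differentiableAt_wirtinger_iterate hU hf _ hz)
        (differentiableAt_wirtinger_iterate hU hg _ hz),
      hin, Function.iterate_succ_apply', Function.iterate_succ_apply']
    ring

theorem wirtinger_of_hasDerivAt {F : ℂ → ℂ} {F' : ℂ} (hF : HasDerivAt F F' z) :
    wirtinger c F z = (1 + c * I) / 2 * F' := by
  rw [wirtinger, (hF.hasFDerivAt.restrictScalars ℝ).fderiv]
  simp only [ContinuousLinearMap.coe_restrictScalars', ContinuousLinearMap.toSpanSingleton_apply,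
    smul_eq_mul, one_mul]
  ring

theorem wirtinger_comp_conj_of_hasDerivAt {F : ℂ → ℂ} {F' : ℂ}
    (hF : HasDerivAt F F' (conj z)) :
    wirtinger c (fun w => F (conj w)) z = (1 - c * I) / 2 * F' := by
  have h := (hF.hasFDerivAt.restrictScalars ℝ).comp z conjCLE.hasFDerivAt
  rw [wirtinger, (show (fun w => F (conj w)) = F ∘ conj from rfl), h.fderiv]
  simp only [ContinuousLinearMap.comp_apply, ContinuousLinearEquiv.coe_coe,
    ContinuousAlgEquiv.coeCLE_apply, conjCAE_apply, map_one, conj_I,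
    ContinuousLinearMap.coe_restrictScalars', ContinuousLinearMap.toSpanSingleton_apply,
    smul_eq_mul]
  ring

theorem wirtinger_norm_rpow (β : ℝ) (hz : z ≠ 0) :
    wirtinger c (fun w => ((‖w‖ ^ (2 * β) : ℝ) : ℂ)) z
      = β * ((‖z‖ ^ (2 * β) : ℝ) : ℂ) *
          ((1 + c * I) / 2 * z⁻¹ + (1 - c * I) / 2 * (conj z)⁻¹) := by
  have hpow (w : ℂ) : ‖w‖ ^ (2 * β) = (‖w‖ ^ 2) ^ β := by
    rw [Real.rpow_mul (norm_nonneg w), Real.rpow_two]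
  have hz2 : ‖z‖ ^ 2 ≠ 0 := by positivity
  have h := ofRealCLM.hasFDerivAt.comp z
    (((hasStrictFDerivAt_norm_sq z).hasFDerivAt.rpow_const (p := β) (Or.inl hz2)))
  simp only [Function.comp_def, ← hpow, ofRealCLM_apply] at h
  have hderiv (v : ℂ) : fderiv ℝ (fun w => ((‖w‖ ^ (2 * β) : ℝ) : ℂ)) z v
      = β * ((‖z‖ ^ 2) ^ (β - 1) : ℝ) * (v * conj z + conj v * z) := by
    rw [h.fderiv]
    simp only [ContinuousLinearMap.comp_apply, smul_apply, coe_innerSL_apply, Complex.inner,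
      ofRealCLM_apply, smul_eq_mul, nsmul_eq_mul, ofReal_mul, Nat.cast_ofNat, ofReal_ofNat,
      re_eq_add_conj, map_mul, conj_conj]
    ring
  have hzc : conj z ≠ 0 := by simpa using hz
  rw [wirtinger, hderiv, hderiv, map_one, conj_I, hpow z, Real.rpow_sub_one hz2, ofReal_div,
    ofReal_pow, ← mul_conj']
  field_simp
  ring

end Wirtinger

theorem hasDerivAt_inv_pow {z : ℂ} (n : ℕ) (hz : z ≠ 0) :
    HasDerivAt (fun w : ℂ => w⁻¹ ^ n) (-n * z⁻¹ ^ (n + 1)) z := by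
  have h := hasDerivAt_zpow (-(n : ℤ)) z (Or.inl hz)
  simp only [zpow_neg, zpow_natCast, ← inv_pow] at h
  refine h.congr_deriv ?_
  rw [Int.cast_neg, Int.cast_natCast, show -(n : ℤ) - 1 = -((n + 1 : ℕ) : ℤ) by push_cast; ring,
    zpow_neg, zpow_natCast, inv_pow]

def fallingInvPow (β : ℝ) (w : ℂ) (n : ℕ) : ℂ :=
  (descPochhammer ℂ n).eval (β : ℂ) * w⁻¹ ^ n

theorem fallingInvPow_succ (β : ℝ) (w : ℂ) (n : ℕ) :
    fallingInvPow β w (n + 1) = (β - n) * w⁻¹ * fallingInvPow β w n := by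
  rw [fallingInvPow, fallingInvPow, descPochhammer_succ_eval, pow_succ]
  ring

theorem hasDerivAt_fallingInvPow (β : ℝ) (n : ℕ) {z : ℂ} (hz : z ≠ 0) :
    HasDerivAt (fallingInvPow β · n) (-n * z⁻¹ * fallingInvPow β z n) z := by
  refine ((hasDerivAt_inv_pow n hz).const_mul
    ((descPochhammer ℂ n).eval (β : ℂ))).congr_deriv ?_
  rw [fallingInvPow, pow_succ]
  ring

theorem contDiffOn_ofReal_norm_rpow (β : ℝ) :
    ContDiffOn ℝ ∞ (fun w : ℂ => ((‖w‖ ^ (2 * β) : ℝ) : ℂ)) {0}ᶜ := fun w hw =>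
  (ofRealCLM.contDiff.contDiffAt.comp w
    ((contDiffAt_norm ℝ hw).rpow_const_of_ne (norm_ne_zero_iff.2 hw))).contDiffWithinAt

def normRpowDeriv (β : ℝ) (a b : ℕ) (w : ℂ) : ℂ :=
  ((‖w‖ ^ (2 * β) : ℝ) : ℂ) * fallingInvPow β w a * fallingInvPow β (conj w) b

theorem wirtinger_normRpowDeriv (c : ℂ) (β : ℝ) (a b : ℕ) {z : ℂ} (hz : z ≠ 0) :
    wirtinger c (normRpowDeriv β a b) z
      = ((1 + c * I) / 2 * ((β - a) * z⁻¹) + (1 - c * I) / 2 * ((β - b) * (conj z)⁻¹))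
        * normRpowDeriv β a b z := by
  have hzc : conj z ≠ 0 := by simpa using hz
  have hN : DifferentiableAt ℝ (fun w => ((‖w‖ ^ (2 * β) : ℝ) : ℂ)) z :=
    ((contDiffOn_ofReal_norm_rpow β).differentiableOn (by simp)).differentiableAt
      (isOpen_compl_singleton.mem_nhds hz)
  have hA := hasDerivAt_fallingInvPow β a hz
  have hB := hasDerivAt_fallingInvPow β b hzc
  have hB' : DifferentiableAt ℝ (fun w => fallingInvPow β (conj w) b) z :=
    (hB.differentiableAt.restrictScalars ℝ).comp z conjCLE.differentiableAt
  unfold normRpowDeriv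
  rw [wirtinger_mul (hN.fun_mul (hA.differentiableAt.restrictScalars ℝ)) hB',
    wirtinger_mul hN (hA.differentiableAt.restrictScalars ℝ), wirtinger_norm_rpow β hz,
    wirtinger_of_hasDerivAt hA, wirtinger_comp_conj_of_hasDerivAt hB]
  ring

theorem wdz_normRpowDeriv (β : ℝ) (a b : ℕ) {z : ℂ} (hz : z ≠ 0) :
    wdz (normRpowDeriv β a b) z = normRpowDeriv β (a + 1) b z := by
  rw [wdz_eq_wirtinger, wirtinger_normRpowDeriv _ β a b hz, normRpowDeriv, normRpowDeriv,
    fallingInvPow_succ, neg_mul, I_mul_I]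
  ring

theorem wdzbar_normRpowDeriv (β : ℝ) (a b : ℕ) {z : ℂ} (hz : z ≠ 0) :
    wdzbar (normRpowDeriv β a b) z = normRpowDeriv β a (b + 1) z := by
  rw [wdzbar_eq_wirtinger, wirtinger_normRpowDeriv _ β a b hz, normRpowDeriv, normRpowDeriv,
    fallingInvPow_succ, I_mul_I]
  ring

theorem normRpowDeriv_zero_zero (β : ℝ) :
    normRpowDeriv β 0 0 = fun w => ((‖w‖ ^ (2 * β) : ℝ) : ℂ) := by
  ext w
  simp [normRpowDeriv, fallingInvPow]

theorem eqOn_wdz_iterate_wdzbar_iterate_norm_rpow (β : ℝ) (a b : ℕ) :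
    Set.EqOn (wdz^[a] (wdzbar^[b] fun w => ((‖w‖ ^ (2 * β) : ℝ) : ℂ)))
      (normRpowDeriv β a b) {0}ᶜ := by
  have hU : IsOpen ({0}ᶜ : Set ℂ) := isOpen_compl_singleton
  have hbar : Set.EqOn (wdzbar^[b] (normRpowDeriv β 0 0)) (normRpowDeriv β 0 b) {0}ᶜ :=
    eqOn_wirtinger_iterate_of_succ (F := normRpowDeriv β 0) hU
      (fun n _ hz => wdzbar_normRpowDeriv β 0 n hz) b
  rw [← normRpowDeriv_zero_zero, wdz_eq_wirtinger]
  refine (hbar.wirtinger_iterate hU a).trans ?_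
  refine eqOn_wirtinger_iterate_of_succ (F := (normRpowDeriv β · b)) hU (fun n _ hz => ?_) a
  rw [← wdz_eq_wirtinger]
  exact wdz_normRpowDeriv β n b hz

theorem wdz_iterate_wdzbar_iterate_norm_rpow_mul {U : Set ℂ} (hU : IsOpen U)
    (hU0 : (0 : ℂ) ∉ U) {f : ℂ → ℂ} (hf : ContDiffOn ℝ ∞ f U) (β : ℝ) (p q : ℕ) {z : ℂ}
    (hz : z ∈ U) :
    wdz^[p] (wdzbar^[q] fun w => ((‖w‖ ^ (2 * β) : ℝ) : ℂ) * f w) z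
      = ∑ s ∈ range (q + 1), (q.choose s : ℂ) * ∑ r ∈ range (p + 1), (p.choose r : ℂ) *
          (normRpowDeriv β (p - r) (q - s) z * wdz^[r] (wdzbar^[s] f) z) := by
  have hsub : U ⊆ {0}ᶜ := fun w hw h0 => hU0 (h0 ▸ hw)
  have hN := (contDiffOn_ofReal_norm_rpow β).mono hsub
  have hN' (n : ℕ) := contDiffOn_wirtinger_iterate (c := I) hU hN n
  have hf' (n : ℕ) := contDiffOn_wirtinger_iterate (c := I) hU hf n
  have hD (a b : ℕ) := eqOn_wdz_iterate_wdzbar_iterate_norm_rpow β a b (hsub hz)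
  simp only [wdz_eq_wirtinger, wdzbar_eq_wirtinger] at hD ⊢
  rw [(wirtinger_iterate_mul hU hN hf q).wirtinger_iterate hU p hz,
    wirtinger_iterate_linearCombination hU _ _ (fun s _ => (hN' _).mul (hf' s)) p hz]
  refine sum_congr rfl fun s _ => ?_
  rw [wirtinger_iterate_mul hU (hN' _) (hf' s) p hz]
  simp only [hD]

theorem sum_range_choose_mul_eq_sum_fin {R : Type*} [CommSemiring R] {p k : ℕ} (hp : p < k)
    (X : ℕ → R) :
    ∑ r ∈ range (p + 1), (p.choose r : R) * X r = ∑ r : Fin k, (p.choose r : R) * X r := by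
  rw [Fin.sum_univ_eq_sum_range (fun r => (p.choose r : R) * X r)]
  refine sum_subset (range_subset_range.2 hp) fun r _ hr => ?_
  rw [Nat.choose_eq_zero_of_lt (by simpa using hr), Nat.cast_zero, zero_mul]

def binomialMatrix {R : Type*} [CommRing R] (k : ℕ) (a : ℕ → R) : Matrix (Fin k) (Fin k) R :=
  Matrix.of fun p r => ((p : ℕ).choose r : R) * a (p - r)

theorem det_binomialMatrix {R : Type*} [CommRing R] (k : ℕ) (a : ℕ → R) :
    (binomialMatrix k a).det = a 0 ^ k := by
  rw [Matrix.det_of_isLowerTriangular _ fun p r (hpr : p < r) => by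
    simp [binomialMatrix, Nat.choose_eq_zero_of_lt hpr]]
  simp [binomialMatrix]

def detkMatrix (k : ℕ) (f : ℂ → ℂ) (z : ℂ) : Matrix (Fin k) (Fin k) ℂ :=
  Matrix.of fun p q : Fin k => wdz^[(p : ℕ)] (wdzbar^[(q : ℕ)] f) z

theorem detkMatrix_norm_rpow_mul {U : Set ℂ} (hU : IsOpen U) (hU0 : (0 : ℂ) ∉ U)
    {f : ℂ → ℂ} (hf : ContDiffOn ℝ ∞ f U) (β : ℝ) (k : ℕ) {z : ℂ} (hz : z ∈ U) :
    detkMatrix k (fun w => ((‖w‖ ^ (2 * β) : ℝ) : ℂ) * f w) z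
      = ((‖z‖ ^ (2 * β) : ℝ) : ℂ) • (binomialMatrix k (fallingInvPow β z) *
          detkMatrix k f z * (binomialMatrix k (fallingInvPow β (conj z)))ᵀ) := by
  ext p q
  rw [detkMatrix, Matrix.of_apply,
    wdz_iterate_wdzbar_iterate_norm_rpow_mul hU hU0 hf β _ _ hz, Matrix.smul_apply,
    Matrix.mul_apply, smul_eq_mul, mul_sum, sum_range_choose_mul_eq_sum_fin q.isLt]
  refine sum_congr rfl fun s _ => ?_
  rw [sum_range_choose_mul_eq_sum_fin p.isLt, Matrix.mul_apply, sum_mul, mul_sum, mul_sum]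
  refine sum_congr rfl fun r _ => ?_
  simp only [binomialMatrix, detkMatrix, normRpowDeriv, Matrix.of_apply,
    Matrix.transpose_apply]
  ring

theorem detk_rpow_mul_general (Ω : Set ℂ) (hΩ : IsOpen Ω) (hΩ0 : (0 : ℂ) ∉ Ω)
    (f : ℂ → ℂ) (hf : ContDiffOn ℝ (⊤ : ℕ∞) f Ω) (β : ℝ)
    (g : ℂ → ℂ) (hg : g = fun z => (((‖z‖) ^ (2 * β) : ℝ) : ℂ) * f z)
    (k : ℕ) (z : ℂ) (hz : z ∈ Ω) :
    detk k g z = (((‖z‖) ^ (2 * (k : ℝ) * β) : ℝ) : ℂ) * detk k f z := by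
  have hpow : ((‖z‖ ^ (2 * (k : ℝ) * β) : ℝ) : ℂ) = ((‖z‖ ^ (2 * β) : ℝ) : ℂ) ^ k := by
    rw [← ofReal_pow, ← Real.rpow_natCast, ← Real.rpow_mul (norm_nonneg z), mul_right_comm]
  change (detkMatrix k g z).det = _ * (detkMatrix k f z).det
  rw [hg, detkMatrix_norm_rpow_mul hΩ hΩ0 hf β k hz, Matrix.det_smul, Matrix.det_mul,
    Matrix.det_mul, Matrix.det_transpose, det_binomialMatrix, det_binomialMatrix, hpow]
  simp [fallingInvPow]

/-- For `g(z) = |z|^{2β} f(z)` with `f` smooth on an open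
`Ω ⊆ ℂ∖{0}` and `β ∈ ℝ`, one has `det_k(g) = |z|^{2kβ} det_k(f)` at every point of
`Ω` where `det_j(f) ≠ 0` for all `1 ≤ j ≤ k−1`. -/
theorem detk_rpow_mul (Ω : Set ℂ) (hΩ : IsOpen Ω) (hΩ0 : (0 : ℂ) ∉ Ω)
    (f : ℂ → ℂ) (hf : ContDiffOn ℝ (⊤ : ℕ∞) f Ω) (β : ℝ)
    (g : ℂ → ℂ) (hg : g = fun z => (((‖z‖) ^ (2 * β) : ℝ) : ℂ) * f z)
    (k : ℕ) (hk : 1 ≤ k) (z : ℂ) (hz : z ∈ Ω)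
    (hdet : ∀ j, 1 ≤ j → j ≤ k - 1 → detk j f z ≠ 0) :
    detk k g z = (((‖z‖) ^ (2 * (k : ℝ) * β) : ℝ) : ℂ) * detk k f z :=
  detk_rpow_mul_general Ω hΩ hΩ0 f hf β g hg k z hz
end
end

section
/- Let n ≥ 1, μ_1,…,μ_n > 0, γ_i = μ_i − 1, λ_0,…,λ_n ∈ ℝ, c_{ij} ∈ ℂ, and on the slit plane ℂ∖(−∞,0] (with principal branch powers) define f̃(z) = λ_0 + Σ_{i=1}^n λ_i |P_i(z)|², where P_i(z) = z^{μ_1+⋯+μ_i} + Σ_{j=1}^{i−1} c_{ij} z^{μ_1+⋯+μ_j} + c_{i0}. Then det_{n+1}(f̃) = λ_0 λ_1 ⋯ λ_n · ∏_{1 ≤ i ≤ j ≤ n} (μ_i + μ_{i+1} + ⋯ + μ_j)² · |z|^{2nγ_1 + 2(n−1)γ_2 + ⋯ + 2γ_n} on ℂ∖(−∞,0]. -/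
open Complex Finset MeasureTheory

noncomputable section

/-!
Put `Q_0 = 1` and `Q_i = P_i`, so that `f̃ = Σ_{i=0}^n λ_i |Q_i|²` and `Q = K (z^{e_0}, …, z^{e_n})`
with `e_j = μ_1 + ⋯ + μ_j` and `K` lower unitriangular. Then
`f̃ = Σ_{j,k} A_{jk} z^{e_j} \overline{z^{e_k}}` with `A = Kᵀ Λ K̄`, and as `∂_z` only sees the
holomorphic factor and `∂_z̄` only the antiholomorphic one, the matrix defining `det_{n+1}(f̃)` is
`B A Bᴴ` with `B_{pj} = ∂_z^p z^{e_j} = e_j(e_j - 1)⋯(e_j - p + 1) z^{e_j - p}`. Hence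
`det_{n+1}(f̃) = λ_0⋯λ_n |det B|²`. Pulling `z^{-p}` out of the rows and `z^{e_j}` out of the
columns leaves a matrix of falling factorials, whose determinant is the Vandermonde `∏_{i<j} (e_j - e_i)`.
-/

open Topology Matrix ComplexConjugate

def wirtingerCLM (a b : ℂ) : ℂ →L[ℝ] ℂ :=
  a • ContinuousLinearMap.id ℝ ℂ + b • conjCLE.toContinuousLinearMap

@[simp]
lemma wirtingerCLM_apply (a b v : ℂ) : wirtingerCLM a b v = a * v + b * conj v := by
  simp [wirtingerCLM]

lemma wdz_eq_of_hasFDerivAt {f : ℂ → ℂ} {a b z : ℂ} (h : HasFDerivAt f (wirtingerCLM a b) z) :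
    wdz f z = a := by
  rw [wdz, h.fderiv, wirtingerCLM_apply, wirtingerCLM_apply, map_one, conj_I]
  linear_combination (b - a) / 2 * I_sq

lemma wdzbar_eq_of_hasFDerivAt {f : ℂ → ℂ} {a b z : ℂ}
    (h : HasFDerivAt f (wirtingerCLM a b) z) : wdzbar f z = b := by
  rw [wdzbar, h.fderiv, wirtingerCLM_apply, wirtingerCLM_apply, map_one, conj_I]
  linear_combination (a - b) / 2 * I_sq

lemma wirtingerCLM_sum {ι : Type*} (s : Finset ι) (a b : ι → ℂ) :
    ∑ i ∈ s, wirtingerCLM (a i) (b i) = wirtingerCLM (∑ i ∈ s, a i) (∑ i ∈ s, b i) := by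
  ext1 v
  simp [sum_add_distrib, sum_mul]

lemma HasDerivAt.hasFDerivAt_mul_conj {g h : ℂ → ℂ} {g' h' z : ℂ} (hg : HasDerivAt g g' z)
    (hh : HasDerivAt h h' z) :
    HasFDerivAt (fun w => g w * conj (h w))
      (wirtingerCLM (g' * conj (h z)) (g z * conj h')) z := by
  refine ((hg.hasFDerivAt.restrictScalars ℝ).mul' (conjCLE.toContinuousLinearMap.hasFDerivAt.comp
    z (hh.hasFDerivAt.restrictScalars ℝ))).congr_fderiv ?_
  ext1 v
  simp only [_root_.add_apply, _root_.smul_apply, ContinuousLinearMap.comp_apply,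
    ContinuousLinearMap.coe_restrictScalars',
    ContinuousLinearMap.toSpanSingleton_apply, ContinuousLinearEquiv.coe_coe, Function.comp_apply,
    conjCLE_apply, op_smul_eq_smul, smul_eq_mul, map_mul, wirtingerCLM_apply]
  ring

lemma wdz_congr {f g : ℂ → ℂ} {z : ℂ} (h : f =ᶠ[𝓝 z] g) : wdz f z = wdz g z := by
  rw [wdz, wdz, h.fderiv_eq]

lemma wdzbar_congr {f g : ℂ → ℂ} {z : ℂ} (h : f =ᶠ[𝓝 z] g) : wdzbar f z = wdzbar g z := by
  rw [wdzbar, wdzbar, h.fderiv_eq]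

lemma eqOn_iterate_of_local {X Y : Type*} [TopologicalSpace X] {U : Set X} (hU : IsOpen U)
    {D : (X → Y) → X → Y} (hD : ∀ f g x, f =ᶠ[𝓝 x] g → D f x = D g x) {F : ℕ → X → Y}
    (hF : ∀ k, Set.EqOn (D (F k)) (F (k + 1)) U) {g : X → Y} {j : ℕ}
    (hg : Set.EqOn g (F j) U) (k : ℕ) : Set.EqOn (D^[k] g) (F (j + k)) U := by
  induction k with
  | zero => exact hg
  | succ k ih =>
    intro z hz
    rw [Function.iterate_succ_apply', hD _ _ z (Filter.eventuallyEq_of_mem (hU.mem_nhds hz) ih),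
      hF _ hz, add_assoc]

/-- The `p`-th complex derivative of `w ↦ w ^ c` on the slit plane. -/
def cpowDeriv (c : ℂ) (p : ℕ) (z : ℂ) : ℂ :=
  (descPochhammer ℂ p).eval c * z ^ (c - p)

lemma cpowDeriv_zero (c z : ℂ) : cpowDeriv c 0 z = z ^ c := by
  simp [cpowDeriv]

lemma hasDerivAt_cpowDeriv {z : ℂ} (hz : z ∈ slitPlane) (c : ℂ) (p : ℕ) :
    HasDerivAt (cpowDeriv c p) (cpowDeriv c (p + 1) z) z := by
  refine (((hasDerivAt_id z).cpow_const (c := c - p) hz).const_mul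
    ((descPochhammer ℂ p).eval c)).congr_deriv ?_
  rw [cpowDeriv, descPochhammer_succ_eval, id]
  push_cast
  ring_nf

lemma cpowDeriv_eq_div {z : ℂ} (hz : z ≠ 0) (c : ℂ) (p : ℕ) :
    cpowDeriv c p z = (descPochhammer ℂ p).eval c * z ^ c / z ^ p := by
  rw [cpowDeriv, cpow_sub _ _ hz, cpow_natCast, mul_div_assoc]

section Bianalytic

variable {ι : Type*} [Fintype ι] (A : Matrix ι ι ℂ) (e : ι → ℂ)

/-- `∂_z^p ∂_z̄^q` of `∑_{j,k} A_{jk} z^{e_j} \overline{z^{e_k}}`. -/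
def bianalyticSum (p q : ℕ) (z : ℂ) : ℂ :=
  ∑ j, ∑ k, A j k * (cpowDeriv (e j) p z * conj (cpowDeriv (e k) q z))

lemma hasFDerivAt_bianalyticSum {z : ℂ} (hz : z ∈ slitPlane) (p q : ℕ) :
    HasFDerivAt (bianalyticSum A e p q)
      (wirtingerCLM (bianalyticSum A e (p + 1) q z) (bianalyticSum A e p (q + 1) z)) z := by
  simp only [bianalyticSum, ← wirtingerCLM_sum]
  refine HasFDerivAt.fun_sum fun j _ => HasFDerivAt.fun_sum fun k _ => ?_
  refine (((hasDerivAt_cpowDeriv hz (e j) p).hasFDerivAt_mul_conj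
    (hasDerivAt_cpowDeriv hz (e k) q)).const_smul (A j k)).congr_fderiv ?_
  ext1 v
  simp only [_root_.smul_apply, wirtingerCLM_apply, smul_eq_mul]
  ring

lemma eqOn_iterate_wdz_wdzbar {f : ℂ → ℂ} (hf : Set.EqOn f (bianalyticSum A e 0 0) slitPlane)
    (p q : ℕ) : Set.EqOn (wdz^[p] (wdzbar^[q] f)) (bianalyticSum A e p q) slitPlane := by
  have hq := eqOn_iterate_of_local isOpen_slitPlane (fun _ _ _ => wdzbar_congr)
    (F := bianalyticSum A e 0) (fun k z hz => wdzbar_eq_of_hasFDerivAt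
      (hasFDerivAt_bianalyticSum A e hz 0 k)) hf q
  simpa using eqOn_iterate_of_local isOpen_slitPlane (fun _ _ _ => wdz_congr)
    (F := fun p => bianalyticSum A e p q) (fun k z hz => wdz_eq_of_hasFDerivAt
      (hasFDerivAt_bianalyticSum A e hz k q)) (j := 0) (by simpa using hq) p

def cpowDerivMatrix (m : ℕ) (z : ℂ) : Matrix (Fin m) ι ℂ :=
  of fun p j => cpowDeriv (e j) p z

lemma of_bianalyticSum (m : ℕ) (z : ℂ) :
    of (fun p q : Fin m => bianalyticSum A e p q z) =
      cpowDerivMatrix e m z * A * (cpowDerivMatrix e m z)ᴴ := by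
  ext p q
  simp only [of_apply, bianalyticSum, mul_apply, cpowDerivMatrix, conjTranspose_apply, sum_mul]
  rw [sum_comm]
  simp only [star_def]
  refine sum_congr rfl fun _ _ => sum_congr rfl fun _ _ => by ring

end Bianalytic

lemma det_bianalyticSum {m : ℕ} (A : Matrix (Fin m) (Fin m) ℂ) (e : Fin m → ℂ) (z : ℂ) :
    det (of fun p q : Fin m => bianalyticSum A e p q z) =
      det A * normSq (det (cpowDerivMatrix e m z)) := by
  rw [of_bianalyticSum, det_mul, det_mul, det_conjTranspose, star_def, mul_right_comm,
    mul_conj, mul_comm]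

lemma det_cpowDerivMatrix {m : ℕ} (e : Fin m → ℂ) {z : ℂ} (hz : z ≠ 0) :
    det (cpowDerivMatrix e m z) = det (vandermonde e) * ∏ j : Fin m, z ^ e j / z ^ (j : ℕ) := by
  have hfactor : cpowDerivMatrix e m z = diagonal (fun p : Fin m => (z ^ (p : ℕ))⁻¹) *
      (of fun p j : Fin m => (descPochhammer ℂ p).eval (e j)) * diagonal (fun j => z ^ e j) := by
    ext p j
    rw [mul_diagonal, diagonal_mul, cpowDerivMatrix, of_apply, of_apply, cpowDeriv_eq_div hz]
    ring
  have hvandermonde : det (of fun p j : Fin m => (descPochhammer ℂ p).eval (e j)) =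
      det (vandermonde e) := by
    rw [← det_transpose, det_eval_matrixOfPolynomials_eq_det_vandermonde e
      (fun i => descPochhammer ℂ i) (fun i => descPochhammer_natDegree ℂ i)
      (fun i => monic_descPochhammer ℂ i)]
    rfl
  rw [hfactor, det_mul, det_mul, det_diagonal, det_diagonal, hvandermonde]
  simp_rw [div_eq_mul_inv]
  rw [prod_mul_distrib]
  ring

lemma norm_det_cpowDerivMatrix_ofReal {m : ℕ} (r : Fin m → ℝ) {z : ℂ} (hz : z ≠ 0) :
    ‖det (cpowDerivMatrix (fun j => (r j : ℂ)) m z)‖ =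
      |det (vandermonde r)| * ‖z‖ ^ ∑ j : Fin m, (r j - j) := by
  have hz' : 0 < ‖z‖ := norm_pos_iff.mpr hz
  rw [det_cpowDerivMatrix _ hz, norm_mul, norm_prod, Real.rpow_sum_of_pos hz', det_vandermonde,
    det_vandermonde]
  congr 1
  · rw [← Real.norm_eq_abs, ← Complex.norm_real]
    push_cast
    rfl
  · refine prod_congr rfl fun j _ => ?_
    rw [norm_div, norm_cpow_real, norm_pow, Real.rpow_sub hz', Real.rpow_natCast]

section Gram

variable {ι : Type*} [Fintype ι] [DecidableEq ι] (lam : ι → ℂ)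

lemma sum_mul_mul_conj_eq_bianalyticSum (K : Matrix ι ι ℂ) (e : ι → ℂ) (w : ℂ) :
    ∑ i, lam i * ((∑ j, K i j * w ^ e j) * conj (∑ j, K i j * w ^ e j)) =
      bianalyticSum (Kᵀ * diagonal lam * Kᴴᵀ) e 0 0 w := by
  have hentry : ∀ j k, (Kᵀ * diagonal lam * Kᴴᵀ) j k = ∑ i, K i j * lam i * conj (K i k) :=
    fun j k => by rw [mul_apply]; simp [mul_diagonal]
  simp only [bianalyticSum, cpowDeriv_zero, hentry, map_sum, map_mul, sum_mul_sum]
  simp only [mul_sum, sum_mul]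
  conv_lhs => rw [sum_comm]
  refine sum_congr rfl fun j _ => ?_
  conv_lhs => rw [sum_comm]
  exact sum_congr rfl fun k _ => sum_congr rfl fun i _ => by ring

lemma det_transpose_mul_diagonal_mul {K : Matrix ι ι ℂ} (hK : det K = 1) :
    det (Kᵀ * diagonal lam * Kᴴᵀ) = ∏ i, lam i := by
  rw [det_mul, det_mul, det_transpose, det_transpose, det_conjTranspose, det_diagonal, hK,
    star_one, one_mul, mul_one]

end Gram

lemma sum_range_succ_eq_add_sum_Icc {M : Type*} [AddCommMonoid M] (g : ℕ → M) (n : ℕ) :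
    ∑ i ∈ range (n + 1), g i = g 0 + ∑ i ∈ Icc 1 n, g i := by
  rw [range_eq_Ico, sum_eq_sum_Ico_succ_bot n.succ_pos, zero_add, Nat.succ_eq_add_one,
    Ico_add_one_right_eq_Icc]

lemma sum_range_sum_Icc_one {R : Type*} [CommRing R] (g : ℕ → R) (n : ℕ) :
    ∑ j ∈ range (n + 1), ∑ k ∈ Icc 1 j, g k = ∑ k ∈ Icc 1 n, ((n : R) + 1 - k) * g k := by
  rw [sum_comm' (t' := Icc 1 n) (s' := fun k => Icc k n) (by intro j k; simp only [mem_range, mem_Icc]; omega)]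
  refine sum_congr rfl fun k hk => ?_
  rw [sum_const, Nat.card_Icc, nsmul_eq_mul, Nat.cast_sub (by rw [mem_Icc] at hk; omega)]
  push_cast
  ring

lemma sum_Icc_one_sub_eq_sum_Icc {R : Type*} [AddCommGroup R] (g : ℕ → R) {i j : ℕ}
    (hij : i ≤ j) :
    ∑ k ∈ Icc 1 j, g k - ∑ k ∈ Icc 1 i, g k = ∑ k ∈ Icc (i + 1) j, g k := by
  have h := sum_Ioc_consecutive g (Nat.zero_le i) hij
  simp only [← Icc_add_one_left_eq_Ioc, zero_add] at h
  rw [← h, add_sub_cancel_left]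

lemma det_vandermonde_partialSums (μ : ℕ → ℝ) (n : ℕ) :
    det (vandermonde fun j : Fin (n + 1) => ∑ k ∈ Icc 1 (j : ℕ), μ k) =
      ∏ i ∈ Icc 1 n, ∏ j ∈ Icc i n, ∑ k ∈ Icc i j, μ k := by
  have hIoi : ∀ i : Fin (n + 1),
      ∏ j ∈ Ioi i, (∑ k ∈ Icc 1 (j : ℕ), μ k - ∑ k ∈ Icc 1 (i : ℕ), μ k) =
        ∏ j ∈ Icc (i + 1 : ℕ) n, ∑ k ∈ Icc (i + 1 : ℕ) j, μ k := by
    intro i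
    rw [Icc_add_one_left_eq_Ioc, ← Ioo_add_one_right_eq_Ioc, ← Fin.map_valEmbedding_Ioi, prod_map]
    exact prod_congr rfl fun j hj => sum_Icc_one_sub_eq_sum_Icc μ (mem_Ioi.mp hj).le
  rw [det_vandermonde, prod_congr rfl fun i _ => hIoi i,
    Fin.prod_univ_eq_prod_range (fun i => ∏ j ∈ Icc (i + 1) n, ∑ k ∈ Icc (i + 1) j, μ k),
    prod_range_succ, Icc_eq_empty (by omega), prod_empty, mul_one, ← Ico_add_one_right_eq_Icc,
    prod_Ico_eq_prod_range, Nat.add_sub_cancel]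
  simp_rw [add_comm 1]

lemma sum_partialSums_sub_index (μ : ℕ → ℝ) (n : ℕ) :
    ∑ j : Fin (n + 1), (∑ k ∈ Icc 1 (j : ℕ), μ k - (j : ℕ)) =
      ∑ i ∈ Icc 1 n, ((n : ℝ) + 1 - i) * (μ i - 1) := by
  rw [Fin.sum_univ_eq_sum_range (fun j => ∑ k ∈ Icc 1 j, μ k - j), ← sum_range_sum_Icc_one]
  refine sum_congr rfl fun j _ => ?_
  rw [sum_sub_distrib, sum_const, Nat.card_Icc, Nat.add_sub_cancel, nsmul_one]

def lowerUnitriangular (c : ℕ → ℕ → ℂ) (m : ℕ) : Matrix (Fin m) (Fin m) ℂ :=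
  of fun i j => if (j : ℕ) < i then c i j else if (j : ℕ) = i then 1 else 0

lemma det_lowerUnitriangular (c : ℕ → ℕ → ℂ) (m : ℕ) : det (lowerUnitriangular c m) = 1 := by
  rw [det_of_isLowerTriangular]
  · exact prod_eq_one fun i _ => by simp [lowerUnitriangular]
  · intro i j hij
    have hij : (i : ℕ) < j := hij
    simp only [lowerUnitriangular, of_apply, if_neg hij.not_gt, if_neg hij.ne']

lemma sum_lowerUnitriangular_mul (c : ℕ → ℕ → ℂ) {m : ℕ} (x : ℕ → ℂ) (i : Fin m) :
    ∑ j, lowerUnitriangular c m i j * x j = ∑ j ∈ range i, c i j * x j + x i := by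
  simp only [lowerUnitriangular, of_apply]
  rw [Fin.sum_univ_eq_sum_range
      (fun j => (if j < i then c i j else if j = i then 1 else 0) * x j),
    ← sum_range_add_sum_Ico _ i.isLt, sum_range_succ]
  have htail : ∑ j ∈ Ico (i + 1 : ℕ) m,
      (if j < i then c i j else if j = (i : ℕ) then 1 else 0) * x j = 0 :=
    sum_eq_zero fun j hj => by
      have hij : (i : ℕ) < j := (mem_Ico.mp hj).1
      rw [if_neg hij.not_gt, if_neg hij.ne', zero_mul]
  rw [htail, add_zero, if_neg (lt_irrefl _), if_pos rfl, one_mul]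
  exact congrArg (· + x i) (sum_congr rfl fun j hj => by rw [if_pos (mem_range.mp hj)])

lemma add_sum_mul_norm_sq_eq_bianalyticSum (n : ℕ) (μ lam : ℕ → ℝ) (c : ℕ → ℕ → ℂ)
    (P : ℕ → ℂ → ℂ)
    (hP : ∀ i, P i = fun z =>
      z ^ ((∑ k ∈ Icc 1 i, μ k : ℝ) : ℂ)
        + ∑ j ∈ Icc 1 (i - 1), c i j * z ^ ((∑ k ∈ Icc 1 j, μ k : ℝ) : ℂ) + c i 0) (w : ℂ) :
    ((lam 0 : ℝ) : ℂ) + ∑ i ∈ Icc 1 n, ((lam i * ‖P i w‖ ^ 2 : ℝ) : ℂ) =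
      bianalyticSum ((lowerUnitriangular c (n + 1))ᵀ *
          diagonal (fun i : Fin (n + 1) => (lam i : ℂ)) * (lowerUnitriangular c (n + 1))ᴴᵀ)
        (fun j => ((∑ k ∈ Icc 1 (j : ℕ), μ k : ℝ) : ℂ)) 0 0 w := by
  set x : ℕ → ℂ := fun j => w ^ ((∑ k ∈ Icc 1 j, μ k : ℝ) : ℂ)
  have hQ : ∀ i : Fin (n + 1), ∑ j, lowerUnitriangular c (n + 1) i j *
      w ^ ((∑ k ∈ Icc 1 (j : ℕ), μ k : ℝ) : ℂ) = ∑ j ∈ range i, c i j * x j + x i :=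
    sum_lowerUnitriangular_mul c x
  have hx0 : x 0 = 1 := by simp [x]
  rw [← sum_mul_mul_conj_eq_bianalyticSum]
  simp only [hQ]
  rw [Fin.sum_univ_eq_sum_range (fun i => (lam i : ℂ) *
      ((∑ j ∈ range i, c i j * x j + x i) * conj (∑ j ∈ range i, c i j * x j + x i))),
    sum_range_succ_eq_add_sum_Icc]
  congr 1
  · simp [hx0]
  · refine sum_congr rfl fun i hi => ?_
    obtain ⟨i, rfl⟩ : ∃ i', i = i' + 1 := ⟨i - 1, by rw [mem_Icc] at hi; omega⟩
    have hPQ : P (i + 1) w = ∑ j ∈ range (i + 1), c (i + 1) j * x j + x (i + 1) := by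
      rw [sum_range_succ_eq_add_sum_Icc, hx0, mul_one, hP]
      simp only [x, Nat.add_sub_cancel]
      ring
    rw [← hPQ, mul_conj, normSq_eq_norm_sq]
    push_cast
    rfl

theorem detk_explicit_formula_general (n : ℕ)
    (μ : ℕ → ℝ)
    (lam : ℕ → ℝ) (c : ℕ → ℕ → ℂ)
    (P : ℕ → ℂ → ℂ)
    (hP : ∀ i, P i = fun z =>
      z ^ (((∑ k ∈ Finset.Icc 1 i, μ k) : ℝ) : ℂ)
        + ∑ j ∈ Finset.Icc 1 (i - 1), c i j * z ^ (((∑ k ∈ Finset.Icc 1 j, μ k) : ℝ) : ℂ)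
        + c i 0)
    (f : ℂ → ℂ)
    (hf : f = fun z =>
      ((lam 0 : ℝ) : ℂ) + ∑ i ∈ Finset.Icc 1 n, ((lam i * (‖P i z‖) ^ 2 : ℝ) : ℂ)) :
    ∀ z ∈ Complex.slitPlane,
      detk (n + 1) f z =
        ((((∏ i ∈ Finset.range (n + 1), lam i) *
            ∏ i ∈ Finset.Icc 1 n, ∏ j ∈ Finset.Icc i n, (∑ k ∈ Finset.Icc i j, μ k) ^ 2) *
            (‖z‖) ^ (∑ i ∈ Finset.Icc 1 n, 2 * ((n : ℝ) + 1 - i) * (μ i - 1)) : ℝ) : ℂ) := by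
  intro z hz
  set K := lowerUnitriangular c (n + 1)
  set A := Kᵀ * diagonal (fun i : Fin (n + 1) => (lam i : ℂ)) * Kᴴᵀ
  set e := fun j : Fin (n + 1) => ((∑ k ∈ Icc 1 (j : ℕ), μ k : ℝ) : ℂ)
  have hf' : Set.EqOn f (bianalyticSum A e 0 0) slitPlane := fun w _ => by
    rw [hf]; exact add_sum_mul_norm_sq_eq_bianalyticSum n μ lam c P hP w
  have hentries : (of fun p q : Fin (n + 1) => wdz^[p] (wdzbar^[q] f) z) =
      of fun p q : Fin (n + 1) => bianalyticSum A e p q z := by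
    ext p q
    exact eqOn_iterate_wdz_wdzbar _ _ hf' p q hz
  have hexponent : ∑ i ∈ Icc 1 n, 2 * ((n : ℝ) + 1 - i) * (μ i - 1) =
      (∑ i ∈ Icc 1 n, ((n : ℝ) + 1 - i) * (μ i - 1)) * 2 := by
    rw [sum_mul]; exact sum_congr rfl fun _ _ => by ring
  rw [detk, hentries, det_bianalyticSum,
    det_transpose_mul_diagonal_mul _ (det_lowerUnitriangular c _), normSq_eq_norm_sq,
    norm_det_cpowDerivMatrix_ofReal _ (slitPlane_ne_zero hz), det_vandermonde_partialSums,
    sum_partialSums_sub_index, ← Fin.prod_univ_eq_prod_range, hexponent, Real.rpow_mul (norm_nonneg z), Real.rpow_two, mul_pow, sq_abs]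
  simp_rw [prod_pow]
  push_cast
  ring

/-- On the slit plane, with
`f̃(z) = λ_0 + Σ_{i=1}^n λ_i |P_i(z)|²` and
`P_i(z) = z^{μ_1+⋯+μ_i} + Σ_{j=1}^{i−1} c_{ij} z^{μ_1+⋯+μ_j} + c_{i0}` (principal
branch powers, `μ_i > 0`, `γ_i = μ_i − 1`), one has
`det_{n+1}(f̃) = λ_0⋯λ_n ∏_{1≤i≤j≤n}(μ_i+⋯+μ_j)² |z|^{2nγ_1+2(n−1)γ_2+⋯+2γ_n}`. -/
theorem detk_explicit_formula (n : ℕ) (hn : 1 ≤ n)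
    (μ : ℕ → ℝ) (hμ : ∀ i ∈ Finset.Icc 1 n, 0 < μ i)
    (lam : ℕ → ℝ) (c : ℕ → ℕ → ℂ)
    (P : ℕ → ℂ → ℂ)
    (hP : ∀ i, P i = fun z =>
      z ^ (((∑ k ∈ Finset.Icc 1 i, μ k) : ℝ) : ℂ)
        + ∑ j ∈ Finset.Icc 1 (i - 1), c i j * z ^ (((∑ k ∈ Finset.Icc 1 j, μ k) : ℝ) : ℂ)
        + c i 0)
    (f : ℂ → ℂ)
    (hf : f = fun z =>
      ((lam 0 : ℝ) : ℂ) + ∑ i ∈ Finset.Icc 1 n, ((lam i * (‖P i z‖) ^ 2 : ℝ) : ℂ)) :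
    ∀ z ∈ Complex.slitPlane,
      detk (n + 1) f z =
        ((((∏ i ∈ Finset.range (n + 1), lam i) *
            ∏ i ∈ Finset.Icc 1 n, ∏ j ∈ Finset.Icc i n, (∑ k ∈ Finset.Icc i j, μ k) ^ 2) *
            (‖z‖) ^ (∑ i ∈ Finset.Icc 1 n, 2 * ((n : ℝ) + 1 - i) * (μ i - 1)) : ℝ) : ℂ) :=
  detk_explicit_formula_general n μ lam c P hP f hf
end
end

section
/- (Desnanot–Jacobi type identity) Let R be a commutative ring, k ≥ 2, and let N be a (k+1)×(k+1) matrix over R. Let M₁ be the (k−1)×(k−1) submatrix of N obtained by deleting the last two rows and last two columns; let N₁ be obtained from N by deleting row k+1 and column k+1; N₂ by deleting row k and column k; N₁* by deleting row k and column k+1; and N₂* by deleting row k+1 and column k. Then det(N)·det(M₁) = det(N₁)·det(N₂) − det(N₁*)·det(N₂*). -/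
/-!
This is the `2 × 2` case of Jacobi's theorem on complementary minors of the adjugate: for a block
matrix `A` on `m ⊕ o`, the principal `o`-block of `adj A` has determinant
`det A ^ (|o| - 1) * det A₁₁`. Multiplying `A` by `[[1, adj₁₂], [0, adj₂₂]]` gives a block
lower triangular matrix with diagonal blocks `A₁₁` and `det A • 1`, which yields the identity
after multiplication by `det A`; that factor is cancelled for the generic matrix over
`ℤ[X_ij]`, whose determinant is a nonzero divisor. For `o` the last two indices, the four
entries of the adjugate block are the four minors of the theorem, with signs that cancel.
-/

open Matrix

namespace Matrix

variable {R : Type*} [CommRing R]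

section Blocks

variable {m o : Type*} [Fintype m] [Fintype o] [DecidableEq m] [DecidableEq o]

theorem det_mul_det_toBlocks₂₂_adjugate (A : Matrix (m ⊕ o) (m ⊕ o) R) :
    A.det * A.adjugate.toBlocks₂₂.det = A.det ^ Fintype.card o * A.toBlocks₁₁.det := by
  set B := A.adjugate
  have hAB : fromBlocks A.toBlocks₁₁ A.toBlocks₁₂ A.toBlocks₂₁ A.toBlocks₂₂ *
      fromBlocks B.toBlocks₁₁ B.toBlocks₁₂ B.toBlocks₂₁ B.toBlocks₂₂ =
      fromBlocks (A.det • 1) 0 0 (A.det • 1) := by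
    rw [fromBlocks_toBlocks, fromBlocks_toBlocks, mul_adjugate, ← fromBlocks_one, fromBlocks_smul,
      smul_zero, smul_zero]
  rw [fromBlocks_multiply, fromBlocks_inj] at hAB
  obtain ⟨-, h₁₂, -, h₂₂⟩ := hAB
  have hAC : A * fromBlocks 1 B.toBlocks₁₂ 0 B.toBlocks₂₂ =
      fromBlocks A.toBlocks₁₁ 0 A.toBlocks₂₁ (A.det • 1) := by
    conv_lhs => rw [← fromBlocks_toBlocks A]
    rw [fromBlocks_multiply, h₁₂, h₂₂]
    simp
  have hdet := congrArg det hAC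
  rw [det_mul, det_fromBlocks_zero₂₁, det_one, one_mul, det_fromBlocks_zero₁₂, det_smul, det_one,
    mul_one] at hdet
  rw [hdet, mul_comm]

theorem det_toBlocks₂₂_adjugate [Nonempty o] (A : Matrix (m ⊕ o) (m ⊕ o) R) :
    A.adjugate.toBlocks₂₂.det = A.det ^ (Fintype.card o - 1) * A.toBlocks₁₁.det := by
  let X := mvPolynomialX (m ⊕ o) (m ⊕ o) ℤ
  suffices hX : X.adjugate.toBlocks₂₂.det = X.det ^ (Fintype.card o - 1) * X.toBlocks₁₁.det by
    let φ := MvPolynomial.eval₂Hom (Int.castRingHom R) fun p : (m ⊕ o) × (m ⊕ o) => A p.1 p.2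
    have hφX : φ.mapMatrix X = A := mvPolynomialX_map_eval₂ _ A
    have hφadj : φ.mapMatrix X.adjugate = A.adjugate := by rw [RingHom.map_adjugate, hφX]
    calc A.adjugate.toBlocks₂₂.det = φ X.adjugate.toBlocks₂₂.det := by
          rw [RingHom.map_det, ← hφadj]; rfl
      _ = φ (X.det ^ (Fintype.card o - 1) * X.toBlocks₁₁.det) := by rw [hX]
      _ = A.det ^ (Fintype.card o - 1) * A.toBlocks₁₁.det := by
          rw [map_mul, map_pow, RingHom.map_det, RingHom.map_det, hφX,
            ← congrArg toBlocks₁₁ hφX]; rfl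
  apply mul_left_cancel₀ (det_mvPolynomialX_ne_zero (m ⊕ o) ℤ)
  rw [det_mul_det_toBlocks₂₂_adjugate, ← mul_assoc, ← pow_succ',
    Nat.sub_add_cancel Fintype.card_pos]

end Blocks

theorem det_adjugate_submatrix_fin_two {n : ℕ} (A : Matrix (Fin (n + 1)) (Fin (n + 1)) R)
    (i j : Fin (n + 1)) :
    (A.adjugate.submatrix ![i, j] ![i, j]).det =
      (A.submatrix i.succAbove i.succAbove).det * (A.submatrix j.succAbove j.succAbove).det -
        (A.submatrix j.succAbove i.succAbove).det * (A.submatrix i.succAbove j.succAbove).det := by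
  have hsign : ((-1 : R) ^ ((j : ℕ) + i)) * (-1) ^ ((i : ℕ) + j) = 1 := by
    rw [← pow_add, Even.neg_one_pow ⟨(j : ℕ) + i, by ring⟩]
  have hdiag : ∀ l : Fin (n + 1), (-1 : R) ^ ((l : ℕ) + l) = 1 :=
    fun l => Even.neg_one_pow ⟨_, rfl⟩
  rw [det_fin_two]
  simp only [submatrix_apply, cons_val_zero, cons_val_one, adjugate_fin_succ_eq_det_submatrix,
    hdiag, one_mul]
  linear_combination -(A.submatrix j.succAbove i.succAbove).det *
    (A.submatrix i.succAbove j.succAbove).det * hsign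

end Matrix

/-- **Desnanot–Jacobi type identity.** Let `N` be a `(k+1)×(k+1)`
matrix over a commutative ring (rows/columns indexed `1, …, k+1`, i.e. `0, …, k`
zero-based). With `M₁` the submatrix deleting the last two rows and columns, `N₁`
deleting row `k+1` and column `k+1`, `N₂` deleting row `k` and column `k`, `N₁*`
deleting row `k` and column `k+1`, and `N₂*` deleting row `k+1` and column `k`,
one has `det N · det M₁ = det N₁ · det N₂ − det N₁* · det N₂*`. -/
theorem desnanot_jacobi (R : Type*) [CommRing R] (k : ℕ) (hk : 2 ≤ k)
    (N : Matrix (Fin (k + 1)) (Fin (k + 1)) R) :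
    N.det *
        (N.submatrix (fun i : Fin (k - 1) => Fin.castLE (by omega) i)
          (fun j : Fin (k - 1) => Fin.castLE (by omega) j)).det
      = (N.submatrix Fin.castSucc Fin.castSucc).det *
          (N.submatrix (Fin.succAbove ⟨k - 1, by omega⟩)
            (Fin.succAbove ⟨k - 1, by omega⟩)).det
        - (N.submatrix (Fin.succAbove ⟨k - 1, by omega⟩) Fin.castSucc).det *
            (N.submatrix Fin.castSucc (Fin.succAbove ⟨k - 1, by omega⟩)).det := by
  set p : Fin (k + 1) := ⟨k - 1, by omega⟩
  let e : Fin (k - 1) ⊕ Fin 2 ≃ Fin (k + 1) := finSumFinEquiv.trans (finCongr (by omega))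
  have he_inr : e ∘ Sum.inr = ![p, Fin.last k] := by
    ext i
    fin_cases i <;> simp [e, p]
    omega
  have hblock : (N.adjugate.submatrix e e).toBlocks₂₂ =
      N.adjugate.submatrix ![p, Fin.last k] ![p, Fin.last k] := by
    rw [← he_inr]; rfl
  have h := det_toBlocks₂₂_adjugate (N.submatrix e e)
  rw [adjugate_submatrix_equiv_self, det_submatrix_equiv_self, hblock,
    det_adjugate_submatrix_fin_two, Fin.succAbove_last, Fintype.card_fin, pow_one] at h
  calc N.det * _ = N.det * (N.submatrix e e).toBlocks₁₁.det := rfl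
    _ = _ := by rw [← h]; ring
end

section
/- (Generalized Vandermonde determinant with derivatives) Let k ≥ 0, β_0, β_1, …, β_k ∈ ℝ, and for z in the slit plane ℂ∖(−∞,0] define z^β using the principal branch of the logarithm. Then the determinant of the (k+1)×(k+1) matrix whose (i,j) entry is the i-th complex derivative of z ↦ z^{β_j} (0 ≤ i, j ≤ k) equals ∏_{0 ≤ p < q ≤ k} (β_q − β_p) · z^{β_0 + β_1 + ⋯ + β_k − k(k+1)/2} for every z ∈ ℂ∖(−∞,0]. -/
/-!
The `i`-th derivative of `w ↦ w ^ c` is `(c)ᵢ z ^ (c - i)`, with `(c)ᵢ` the falling factorial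
(`descPochhammer`). Hence the matrix factors as
`diag (z ^ (-i)) * ((β_j)ᵢ)ᵢⱼ * diag (z ^ β_j)`. As the falling factorial `(X)ᵢ` is a monic
polynomial of degree `i`, row operations turn the middle matrix into the Vandermonde matrix of
the `β_j`, whose determinant is `∏_{p<q} (β_q - β_p)`.
-/

open Finset Polynomial Topology

theorem Finset.sum_range_succ_id_natCast {K : Type*} [Field K] [CharZero K] (n : ℕ) :
    ∑ i ∈ range (n + 1), (i : K) = n * (n + 1) / 2 := by
  induction n with
  | zero => simp
  | succ n ih => rw [sum_range_succ, ih]; push_cast; ring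

theorem Fin.prod_prod_Ioi_eq_prod_range_prod_range {M : Type*} [CommMonoid M] (n : ℕ)
    (f : ℕ → ℕ → M) :
    ∏ i : Fin n, ∏ j ∈ Ioi i, f i j = ∏ q ∈ range n, ∏ p ∈ range q, f p q := by
  rw [prod_comm' (t' := univ) (s' := fun j => Iio j) (by simp),
    ← Fin.prod_univ_eq_prod_range (fun q => ∏ p ∈ range q, f p q)]
  refine prod_congr rfl fun j _ => ?_
  rw [← Nat.Iio_eq_range, ← Fin.map_valEmbedding_Iio, prod_map]
  rfl

theorem Matrix.det_descPochhammer_eval {R : Type*} [CommRing R] [Nontrivial R] [NoZeroDivisors R]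
    {n : ℕ} (v : Fin n → R) :
    (Matrix.of fun i j : Fin n => (descPochhammer R i).eval (v j)).det
      = ∏ i, ∏ j ∈ Ioi i, (v j - v i) := by
  rw [← det_transpose, ← det_vandermonde,
    det_eval_matrixOfPolynomials_eq_det_vandermonde v (fun i => descPochhammer R i)
      (fun i => descPochhammer_natDegree R i) (fun i => monic_descPochhammer R i)]
  rfl

namespace Complex

theorem cpow_sum {ι : Type*} {z : ℂ} (hz : z ≠ 0) (s : Finset ι) (f : ι → ℂ) :
    z ^ (∑ i ∈ s, f i) = ∏ i ∈ s, z ^ f i := by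
  simp only [cpow_def_of_ne_zero hz, mul_sum, exp_sum]

theorem iter_deriv_cpow_const (c : ℂ) (n : ℕ) {z : ℂ} (hz : z ∈ slitPlane) :
    deriv^[n] (fun w : ℂ => w ^ c) z = (descPochhammer ℂ n).eval c * z ^ (c - n) := by
  induction n generalizing z with
  | zero => simp
  | succ n ih =>
    have hnear : deriv^[n] (fun w : ℂ => w ^ c) =ᶠ[𝓝 z]
        fun w => (descPochhammer ℂ n).eval c * w ^ (c - n) :=
      Filter.eventually_of_mem (isOpen_slitPlane.mem_nhds hz) fun w hw => ih hw
    have hderiv : HasDerivAt (fun w : ℂ => w ^ (c - n)) ((c - n) * z ^ (c - n - 1)) z := by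
      simpa using (hasDerivAt_id z).cpow_const hz
    rw [Function.iterate_succ_apply', hnear.deriv_eq, (hderiv.const_mul _).deriv,
      descPochhammer_succ_right, eval_mul, eval_sub, eval_X, eval_natCast, Nat.cast_succ,
      sub_add_eq_sub_sub, mul_assoc]

theorem det_iter_deriv_cpow {n : ℕ} (v : Fin n → ℂ) {z : ℂ} (hz : z ∈ slitPlane) :
    (Matrix.of fun i j : Fin n => deriv^[i] (fun w : ℂ => w ^ v j) z).det
      = (∏ i, ∏ j ∈ Ioi i, (v j - v i)) * z ^ (∑ j, v j - ∑ i : Fin n, ((i : ℕ) : ℂ)) := by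
  have hz0 := slitPlane_ne_zero hz
  have hfactor : (Matrix.of fun i j : Fin n => deriv^[i] (fun w : ℂ => w ^ v j) z)
      = Matrix.diagonal (fun i : Fin n => z ^ (-((i : ℕ) : ℂ)))
        * Matrix.of (fun i j : Fin n => (descPochhammer ℂ i).eval (v j))
        * Matrix.diagonal (fun j => z ^ v j) := by
    ext i j
    rw [Matrix.mul_diagonal, Matrix.diagonal_mul, Matrix.of_apply, Matrix.of_apply,
      iter_deriv_cpow_const _ _ hz, sub_eq_neg_add, cpow_add _ _ hz0]
    ring
  rw [hfactor, Matrix.det_mul, Matrix.det_mul, Matrix.det_diagonal, Matrix.det_diagonal,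
    Matrix.det_descPochhammer_eval, sub_eq_neg_add, cpow_add _ _ hz0, ← sum_neg_distrib,
    cpow_sum hz0, cpow_sum hz0]
  ring

end Complex

/-- **Generalized Vandermonde determinant with derivatives.**
For `β_0, …, β_k ∈ ℝ` and `z` in the slit plane (principal branch powers), the
determinant of the `(k+1)×(k+1)` matrix whose `(i,j)` entry is the `i`-th complex
derivative of `z ↦ z^{β_j}` equals
`∏_{0≤p<q≤k} (β_q − β_p) · z^{β_0+⋯+β_k − k(k+1)/2}`. -/
theorem vandermonde_derivatives (k : ℕ) (β : ℕ → ℝ) :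
    ∀ z ∈ Complex.slitPlane,
      Matrix.det (Matrix.of fun i j : Fin (k + 1) =>
          deriv^[(i : ℕ)] (fun w : ℂ => w ^ ((β (j : ℕ) : ℝ) : ℂ)) z)
        = (((∏ q ∈ Finset.range (k + 1), ∏ p ∈ Finset.range q, (β q - β p)) : ℝ) : ℂ) *
            z ^ ((((∑ j ∈ Finset.range (k + 1), β j) - (k : ℝ) * ((k : ℝ) + 1) / 2) : ℝ) : ℂ) := by
  intro z hz
  rw [Complex.det_iter_deriv_cpow (fun j => (β j : ℂ)) hz,
    Fin.prod_prod_Ioi_eq_prod_range_prod_range (k + 1) fun p q => (β q - β p : ℂ),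
    Fin.sum_univ_eq_sum_range (fun j => (β j : ℂ)), Fin.sum_univ_eq_sum_range (fun i => (i : ℂ)),
    sum_range_succ_id_natCast]
  push_cast
  rfl
end
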